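/- arXiv:math/0503719 — 6 statements merged into one kernel-verified Lean document; each statement's English description precedes it below -/
import Mathlib

section
/- Fix an integer n ≥ 1 and let k = 2n (so that 2n/k = 1). Then as λ → ∞: I_{n,k}(λ) = (1/k) λ^{−1} log λ · ∫_ℝ a(t, 0, 0) dt + O(λ^{−1}). -/
/- STATEMENT 3: Logarithmic leading term for k = 2n (q = 2n/k = 1):
I_{n,k}(λ) = (1/k) λ^{−1} log λ · ∫_ℝ a(t,0,0) dt + O(λ^{−1})
(Lemma "Theo IO 2eme carte", double-pole case q = 1). -/

open MeasureTheory Filter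

/-- Helper: norm bound for an integral of a function vanishing outside `[-B, B]`. -/
lemma aux_norm_integral_le (g : ℝ → ℂ) (B M' : ℝ) (hB : 0 ≤ B)
    (hg0 : ∀ t : ℝ, B ≤ |t| → g t = 0) (hgM : ∀ t : ℝ, |t| ≤ B → ‖g t‖ ≤ M') :
    ‖∫ t : ℝ, g t‖ ≤ M' * (2 * B) := by
  rw [← setIntegral_eq_integral_of_forall_compl_eq_zero (s := Set.Icc (-B) B)
    (fun x hx => hg0 x (by
      simp only [Set.mem_Icc, not_and_or, not_le] at hx
      rcases hx with h | h
      · rw [abs_of_nonpos (by linarith)]; linarith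
      · rw [abs_of_pos (lt_of_le_of_lt hB h)]; linarith))]
  have h := norm_setIntegral_le_of_norm_le_const (μ := volume) (s := Set.Icc (-B) B)
    (C := M') (f := g) (by simp [Real.volume_Icc])
    (fun x hx => hgM x (abs_le.mpr ⟨hx.1, hx.2⟩))
  simp only [Measure.real] at h
  calc ‖∫ t in Set.Icc (-B) B, g t‖ ≤ M' * (volume (Set.Icc (-B) B)).toReal := h
    _ = M' * (2 * B) := by
        rw [Real.volume_Icc, ENNReal.toReal_ofReal (by linarith)]; ring_nf

set_option maxHeartbeats 1000000 in
theorem Ink_leading_term_log_case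
    (n k : ℕ) (hn : 1 ≤ n) (hk : k = 2 * n)
    (a : ℝ → ℝ → ℝ → ℂ)
    (ha_smooth : ContDiff ℝ (⊤ : ℕ∞) (fun q : ℝ × ℝ × ℝ => a q.1 q.2.1 q.2.2))
    (ha_supp : HasCompactSupport (fun q : ℝ × ℝ × ℝ => a q.1 q.2.1 q.2.2))
    (I : ℝ → ℂ)
    (hI : ∀ lam : ℝ, I lam = ∫ y₁ in Set.Ioi (0 : ℝ),
        (∫ y₂ : ℝ, a (lam * y₁ ^ k * y₂) y₁ y₂) * ((y₁ ^ (2 * n - 1) : ℝ) : ℂ)) :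
    (fun lam : ℝ =>
        I lam - (1 / (k : ℂ)) * ((lam⁻¹ * Real.log lam : ℝ) : ℂ) *
          ∫ t : ℝ, a t 0 0)
      =O[atTop] fun lam : ℝ => lam⁻¹ := by
  classical
  obtain ⟨M, hM⟩ := ha_smooth.continuous.bounded_above_of_compact_support ha_supp
  have hM0 : 0 ≤ M := le_trans (norm_nonneg _) (hM (0,0,0))
  obtain ⟨L, hL⟩ := ContDiff.lipschitzWith_of_hasCompactSupport ha_supp ha_smooth (by simp)
  obtain ⟨R₀, hR₀⟩ := ha_supp.isCompact.isBounded.exists_norm_le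
  set R : ℝ := max R₀ 0 + 1 with hRdef
  have hR1 : 1 ≤ R := by
    have : (0:ℝ) ≤ max R₀ 0 := le_max_right _ _
    linarith
  have hR0 : 0 < R := lt_of_lt_of_le one_pos hR1
  have hR : ∀ t y z : ℝ, R ≤ |t| ∨ R ≤ |y| ∨ R ≤ |z| → a t y z = 0 := by
    intro t y z h
    by_contra hne
    have hmem : (t, y, z) ∈ tsupport (fun q : ℝ × ℝ × ℝ => a q.1 q.2.1 q.2.2) :=
      subset_closure (by simpa [Function.mem_support] using hne)
    have hnorm := hR₀ _ hmem
    have hle : R ≤ ‖(t, y, z)‖ := by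
      rcases h with h | h | h <;>
        simp only [Prod.norm_def, Real.norm_eq_abs] <;>
        [exact le_trans h (le_max_left _ _);
         exact le_trans h (le_trans (le_max_left _ _) (le_max_right _ _));
         exact le_trans h (le_trans (le_max_right _ _) (le_max_right _ _))]
    have h2 : R ≤ R₀ := hle.trans hnorm
    have h1 : R₀ ≤ max R₀ 0 := le_max_left _ _
    rw [hRdef] at h2
    linarith
  have hk0 : k ≠ 0 := by omega
  have hkR : (0:ℝ) < (k:ℝ) := by exact_mod_cast Nat.pos_of_ne_zero hk0
  have hk1 : (1:ℝ) ≤ (k:ℝ) := by exact_mod_cast Nat.one_le_iff_ne_zero.mpr hk0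
  -- Lipschitz-type estimate
  have hLip : ∀ t y z : ℝ, ‖a t y z - a t 0 0‖ ≤ (L:ℝ) * max |y| |z| := by
    intro t y z
    have := hL.dist_le_mul (t, y, z) (t, 0, 0)
    simpa [Prod.dist_eq, Real.dist_eq, Complex.dist_eq] using this
  set A : ℂ := ∫ t : ℝ, a t 0 0 with hAdef
  -- the constant
  set C : ℝ := M * (2*R) + ((L:ℝ)*(2*R) + (L:ℝ)*(2*R)*R) + M * (2*R) * (R-1) with hCdef
  rw [Asymptotics.isBigO_iff]
  refine ⟨C, ?_⟩
  filter_upwards [eventually_ge_atTop (1:ℝ)] with lam hlam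
  have hlam0 : (0:ℝ) < lam := lt_of_lt_of_le one_pos hlam
  set ε : ℝ := lam ^ (-(k:ℝ)⁻¹) with hεdef
  have hε0 : 0 < ε := Real.rpow_pos_of_pos hlam0 _
  have hε1 : ε ≤ 1 := Real.rpow_le_one_of_one_le_of_nonpos hlam (by
    simp [inv_nonneg, hkR.le])
  have hεk : ε ^ k = lam⁻¹ := by
    rw [hεdef, ← Real.rpow_natCast (lam ^ (-(k:ℝ)⁻¹)) k, ← Real.rpow_mul hlam0.le,
      neg_mul, inv_mul_cancel₀ hkR.ne', Real.rpow_neg_one]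
  have hlogε : Real.log ε = -(k:ℝ)⁻¹ * Real.log lam := Real.log_rpow hlam0 _
  -- the rescaled inner integral
  set G : ℝ → ℂ := fun y => ∫ t : ℝ, a t y ((lam * y ^ k)⁻¹ * t) with hGdef
  set f : ℝ → ℂ := fun y => ((y⁻¹ : ℝ) : ℂ) * G y with hfdef
  -- measurability
  have hGmeas : StronglyMeasurable G := by
    apply MeasureTheory.StronglyMeasurable.integral_prod_right'
      (f := fun p : ℝ × ℝ => a p.2 p.1 ((lam * p.1 ^ k)⁻¹ * p.2))
    apply Measurable.stronglyMeasurable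
    have hm : Measurable (fun p : ℝ × ℝ => (p.2, p.1, (lam * p.1 ^ k)⁻¹ * p.2) :
        ℝ × ℝ → ℝ × ℝ × ℝ) := by fun_prop
    exact ha_smooth.continuous.measurable.comp hm
  have hfmeas : StronglyMeasurable f := by
    apply StronglyMeasurable.mul _ hGmeas
    exact (Complex.measurable_ofReal.comp measurable_inv).stronglyMeasurable
  -- positivity of the scaling factor
  have hc : ∀ y : ℝ, 0 < y → 0 < lam * y ^ k := fun y hy =>
    mul_pos hlam0 (pow_pos hy _)
  -- bounds on G
  have hGle : ∀ y : ℝ, ‖G y‖ ≤ M * (2*R) := by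
    intro y
    apply aux_norm_integral_le _ R M hR0.le
    · intro t ht; exact hR _ _ _ (Or.inl ht)
    · intro t _; exact hM (t, y, (lam * y ^ k)⁻¹ * t)
  have hGle2 : ∀ y : ℝ, 0 < y → ‖G y‖ ≤ M * (2*(R*(lam * y ^ k))) := by
    intro y hy
    apply aux_norm_integral_le _ (R*(lam*y^k)) M
      (mul_nonneg hR0.le (hc y hy).le)
    · intro t ht
      apply hR _ _ _ (Or.inr (Or.inr ?_))
      rw [abs_mul, abs_inv, abs_of_pos (hc y hy)]
      calc R = (R * (lam * y ^ k)) * (lam * y ^ k)⁻¹ := by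
              field_simp
        _ ≤ |t| * (lam * y ^ k)⁻¹ := by
              apply mul_le_mul_of_nonneg_right ht (inv_nonneg.mpr (hc y hy).le)
        _ = (lam * y ^ k)⁻¹ * |t| := mul_comm _ _
    · intro t _; exact hM (t, y, (lam * y ^ k)⁻¹ * t)
  have hGzero : ∀ y : ℝ, R ≤ y → G y = 0 := by
    intro y hy
    have : ∀ t : ℝ, a t y ((lam * y ^ k)⁻¹ * t) = 0 := fun t =>
      hR _ _ _ (Or.inr (Or.inl (le_trans hy (le_abs_self y))))
    rw [hGdef]
    simp only [this]
    exact integral_zero _ _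
  -- Lipschitz bound on G y - A
  have habs : ∀ (B t : ℝ), 0 ≤ B → t ∉ Set.Icc (-B) B → B ≤ |t| := by
    intro B t hB ht
    simp only [Set.mem_Icc, not_and_or, not_le] at ht
    rcases ht with h | h
    · rw [abs_of_nonpos (by linarith)]; linarith
    · rw [abs_of_pos (lt_of_le_of_lt hB h)]; linarith
  have hGA : ∀ y : ℝ, 0 < y →
      ‖G y - A‖ ≤ ((L:ℝ) * (y + R * (lam * y ^ k)⁻¹)) * (2*R) := by
    intro y hy
    have hcy : 0 < lam * y ^ k := hc y hy
    have hint1 : Integrable (fun t : ℝ => a t y ((lam * y ^ k)⁻¹ * t)) := by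
      apply Continuous.integrable_of_hasCompactSupport
      · exact ha_smooth.continuous.comp
          (continuous_id.prodMk (continuous_const.prodMk
            (continuous_const.mul continuous_id)))
      · apply HasCompactSupport.intro (isCompact_Icc (a := -R) (b := R))
        intro t ht
        exact hR _ _ _ (Or.inl (habs R t hR0.le ht))
    have hint2 : Integrable (fun t : ℝ => a t 0 0) := by
      apply Continuous.integrable_of_hasCompactSupport
      · exact ha_smooth.continuous.comp
          (continuous_id.prodMk (continuous_const.prodMk continuous_const))
      · apply HasCompactSupport.intro (isCompact_Icc (a := -R) (b := R))
        intro t ht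
        exact hR _ _ _ (Or.inl (habs R t hR0.le ht))
    have hsub : G y - A = ∫ t : ℝ, (a t y ((lam * y ^ k)⁻¹ * t) - a t 0 0) :=
      (integral_sub hint1 hint2).symm
    rw [hsub]
    apply aux_norm_integral_le _ R _ hR0.le
    · intro t ht
      rw [hR t y _ (Or.inl ht), hR t 0 0 (Or.inl ht), sub_zero]
    · intro t htR
      calc ‖a t y ((lam * y ^ k)⁻¹ * t) - a t 0 0‖
          ≤ (L:ℝ) * max |y| |(lam * y ^ k)⁻¹ * t| := hLip _ _ _
        _ ≤ (L:ℝ) * (y + R * (lam * y ^ k)⁻¹) := by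
            apply mul_le_mul_of_nonneg_left _ (L.coe_nonneg)
            have h1 : |(lam * y ^ k)⁻¹ * t| ≤ R * (lam * y ^ k)⁻¹ := by
              rw [abs_mul, abs_inv, abs_of_pos hcy, mul_comm]
              exact mul_le_mul_of_nonneg_right htR (inv_nonneg.mpr hcy.le)
            have h2 : |y| = y := abs_of_pos hy
            rcases max_cases |y| |(lam * y ^ k)⁻¹ * t| with ⟨hm, _⟩ | ⟨hm, _⟩ <;> rw [hm]
            · nlinarith [mul_nonneg hR0.le (inv_nonneg.mpr hcy.le)]
            · nlinarith
  -- the pointwise substitution identity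
  have hpt : ∀ y ∈ Set.Ioi (0:ℝ),
      (∫ y₂ : ℝ, a (lam * y ^ k * y₂) y y₂) * ((y ^ (2*n-1) : ℝ) : ℂ)
        = ((lam⁻¹ : ℝ) : ℂ) * f y := by
    intro y hy
    have hy0 : 0 < y := hy
    have hcy : 0 < lam * y ^ k := hc y hy0
    have hsubst : (∫ y₂ : ℝ, a ((lam * y ^ k) * y₂) y y₂)
        = (((lam * y ^ k)⁻¹ : ℝ) : ℂ) * G y := by
      have h2 : (fun y₂ : ℝ => a ((lam * y ^ k) * y₂) y y₂)
          = fun y₂ => (fun t => a t y ((lam * y ^ k)⁻¹ * t)) ((lam * y ^ k) * y₂) :=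
        funext fun y₂ => by beta_reduce; rw [inv_mul_cancel_left₀ hcy.ne']
      rw [h2, MeasureTheory.Measure.integral_comp_mul_left
        (fun t => a t y ((lam * y ^ k)⁻¹ * t)) (lam * y ^ k),
        abs_of_pos (inv_pos.mpr hcy), Complex.real_smul]
    have hre : (lam * y ^ k)⁻¹ * y ^ (2*n-1) = lam⁻¹ * y⁻¹ := by
      obtain ⟨m, hm⟩ : ∃ m, k = m + 1 := ⟨k - 1, by omega⟩
      have h2n1 : 2*n - 1 = m := by omega
      rw [h2n1, hm, pow_succ]
      field_simp
    rw [hsubst, hfdef]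
    calc (((lam * y ^ k)⁻¹ : ℝ) : ℂ) * G y * ((y ^ (2*n-1) : ℝ) : ℂ)
        = (((lam * y ^ k)⁻¹ * y ^ (2*n-1) : ℝ) : ℂ) * G y := by push_cast; ring
      _ = ((lam⁻¹ * y⁻¹ : ℝ) : ℂ) * G y := by rw [hre]
      _ = ((lam⁻¹ : ℝ) : ℂ) * (((y⁻¹ : ℝ) : ℂ) * G y) := by push_cast; ring
  have hIeq : I lam = ((lam⁻¹ : ℝ) : ℂ) * ∫ y in Set.Ioi (0:ℝ), f y := by
    rw [hI lam, setIntegral_congr_fun measurableSet_Ioi hpt, integral_const_mul]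
  -- generic boundedness integrability
  have hbdd : ∀ (s : Set ℝ) (C₀ : ℝ), MeasurableSet s → volume s ≠ ⊤ →
      (∀ y ∈ s, ‖f y‖ ≤ C₀) → IntegrableOn f s := by
    intro s C₀ hms hvs hb
    exact Measure.integrableOn_of_bounded hvs hfmeas.aestronglyMeasurable
      ((ae_restrict_iff' hms).mpr (Eventually.of_forall hb))
  have hnf : ∀ y : ℝ, 0 < y → ‖f y‖ = y⁻¹ * ‖G y‖ := by
    intro y hy
    rw [hfdef]
    beta_reduce
    rw [norm_mul, Complex.norm_real, Real.norm_eq_abs, abs_inv, abs_of_pos hy]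
  -- piece 1
  have hb1 : ∀ y ∈ Set.Ioc (0:ℝ) ε, ‖f y‖ ≤ M * (2*R) * (lam * ε^(k-1)) := by
    intro y hy
    have hy0 : 0 < y := hy.1
    rw [hnf y hy0]
    have e1 : y⁻¹ * (M * (2*(R*(lam * y^k)))) = M * (2*R) * (lam * y^(k-1)) := by
      obtain ⟨m, hm⟩ : ∃ m, k = m + 1 := ⟨k - 1, by omega⟩
      rw [hm, pow_succ, show m + 1 - 1 = m from by omega]
      field_simp
    calc y⁻¹ * ‖G y‖ ≤ y⁻¹ * (M*(2*(R*(lam*y^k)))) :=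
          mul_le_mul_of_nonneg_left (hGle2 y hy0) (inv_nonneg.mpr hy0.le)
      _ = M * (2*R) * (lam * y^(k-1)) := e1
      _ ≤ M * (2*R) * (lam * ε^(k-1)) := by
          apply mul_le_mul_of_nonneg_left _ (by positivity)
          exact mul_le_mul_of_nonneg_left (pow_le_pow_left₀ hy0.le hy.2 _) hlam0.le
  have hfi1 : IntegrableOn f (Set.Ioc 0 ε) :=
    hbdd _ _ measurableSet_Ioc (by simp [Real.volume_Ioc]) hb1
  have hS1 : ‖∫ y in Set.Ioc (0:ℝ) ε, f y‖ ≤ M * (2*R) := by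
    have h := norm_setIntegral_le_of_norm_le_const (μ := volume) (s := Set.Ioc (0:ℝ) ε)
      (by simp [Real.volume_Ioc]) hb1
    simp only [Measure.real] at h
    rw [Real.volume_Ioc, ENNReal.toReal_ofReal (by linarith)] at h
    have hpow : ε^(k-1) * ε = ε^k := by
      conv_rhs => rw [show k = (k-1)+1 from by omega]
      rw [pow_succ]
    calc ‖∫ y in Set.Ioc (0:ℝ) ε, f y‖ ≤ M*(2*R)*(lam*ε^(k-1)) * (ε - 0) := h
      _ = M*(2*R)*(lam*(ε^(k-1)*ε)) := by ring
      _ = M*(2*R)*(lam*ε^k) := by rw [hpow]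
      _ = M*(2*R) := by rw [hεk, mul_inv_cancel₀ hlam0.ne', mul_one]
  -- piece 2 integrability
  have hfi2 : IntegrableOn f (Set.Ioc ε 1) := by
    apply hbdd _ (ε⁻¹*(M*(2*R))) measurableSet_Ioc (by simp [Real.volume_Ioc])
    intro y hy
    rw [hnf y (lt_trans hε0 hy.1)]
    exact mul_le_mul (inv_anti₀ hε0 hy.1.le) (hGle y) (norm_nonneg _)
      (inv_nonneg.mpr hε0.le)
  -- piece 3
  have hfzero : ∀ y ∈ Set.Ioi R, f y = 0 := fun y hy => by
    rw [hfdef]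
    beta_reduce
    rw [hGzero y (le_of_lt hy), mul_zero]
  have hb3 : ∀ y ∈ Set.Ioc (1:ℝ) R, ‖f y‖ ≤ M * (2*R) := by
    intro y hy
    rw [hnf y (lt_trans one_pos hy.1)]
    calc y⁻¹ * ‖G y‖ ≤ 1 * (M*(2*R)) :=
          mul_le_mul (inv_le_one_of_one_le₀ hy.1.le) (hGle y) (norm_nonneg _) one_pos.le
      _ = M*(2*R) := one_mul _
  have hfi3a : IntegrableOn f (Set.Ioc 1 R) :=
    hbdd _ _ measurableSet_Ioc (by simp [Real.volume_Ioc]) hb3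
  have hfi3b : IntegrableOn f (Set.Ioi R) := by
    rw [integrableOn_congr_fun hfzero measurableSet_Ioi]
    exact integrableOn_zero
  have hIocIoi : Set.Ioc (1:ℝ) R ∪ Set.Ioi R = Set.Ioi 1 := Set.Ioc_union_Ioi_eq_Ioi hR1
  have hfi3 : IntegrableOn f (Set.Ioi 1) := by rw [← hIocIoi]; exact hfi3a.union hfi3b
  have hdisj : ∀ b c : ℝ, Disjoint (Set.Ioc b c) (Set.Ioi c) := fun b c => by
    rw [Set.disjoint_left]; intro x hx hx'; exact absurd hx.2 (not_le.mpr hx')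
  have hS3 : ‖∫ y in Set.Ioi (1:ℝ), f y‖ ≤ M * (2*R) * (R - 1) := by
    rw [← hIocIoi, setIntegral_union (hdisj 1 R) measurableSet_Ioi hfi3a hfi3b,
      setIntegral_eq_zero_of_forall_eq_zero hfzero, add_zero]
    have h := norm_setIntegral_le_of_norm_le_const (μ := volume) (s := Set.Ioc (1:ℝ) R)
      (by simp [Real.volume_Ioc]) hb3
    simp only [Measure.real] at h
    rwa [Real.volume_Ioc, ENNReal.toReal_ofReal (by linarith)] at h
  -- splitting
  have hsplit : ∫ y in Set.Ioi (0:ℝ), f y = (∫ y in Set.Ioc (0:ℝ) ε, f y) +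
      ((∫ y in Set.Ioc ε 1, f y) + (∫ y in Set.Ioi (1:ℝ), f y)) := by
    have e1 : Set.Ioc ε 1 ∪ Set.Ioi 1 = Set.Ioi ε := Set.Ioc_union_Ioi_eq_Ioi hε1
    have e2 : Set.Ioc (0:ℝ) ε ∪ Set.Ioi ε = Set.Ioi 0 := Set.Ioc_union_Ioi_eq_Ioi hε0.le
    rw [← e2, setIntegral_union (hdisj 0 ε) measurableSet_Ioi hfi1
      (by rw [← e1]; exact hfi2.union hfi3), ← e1,
      setIntegral_union (hdisj ε 1) measurableSet_Ioi hfi2 hfi3]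
  -- the logarithmic term
  have hreal : ∫ y in Set.Ioc ε 1, y⁻¹ = (k:ℝ)⁻¹ * Real.log lam := by
    rw [← intervalIntegral.integral_of_le hε1, integral_inv (by
      rw [Set.uIcc_of_le hε1]; intro h; exact absurd h.1 (not_le.mpr hε0))]
    rw [one_div, Real.log_inv, hlogε]
    ring
  have hAi : IntegrableOn (fun y : ℝ => ((y⁻¹:ℝ):ℂ) * A) (Set.Ioc ε 1) := by
    have hmA : AEStronglyMeasurable (fun y : ℝ => ((y⁻¹:ℝ):ℂ) * A) volume :=
      ((Complex.measurable_ofReal.comp measurable_inv).mul measurable_const).aestronglyMeasurable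
    apply Measure.integrableOn_of_bounded (M := ε⁻¹ * ‖A‖) (by simp [Real.volume_Ioc]) hmA
    apply (ae_restrict_iff' measurableSet_Ioc).mpr (Eventually.of_forall ?_)
    intro y hy
    rw [norm_mul, Complex.norm_real, Real.norm_eq_abs, abs_inv,
      abs_of_pos (lt_trans hε0 hy.1)]
    exact mul_le_mul_of_nonneg_right (inv_anti₀ hε0 hy.1.le) (norm_nonneg _)
  have hT : (((k:ℝ)⁻¹ * Real.log lam : ℝ):ℂ) * A = ∫ y in Set.Ioc ε 1, ((y⁻¹:ℝ):ℂ) * A := by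
    rw [integral_mul_const]
    congr 1
    rw [← hreal]
    exact (integral_ofReal (𝕜 := ℂ) (f := fun y : ℝ => y⁻¹)).symm
  -- second piece estimate
  have h0u : (0:ℝ) ∉ Set.uIcc ε 1 := by
    rw [Set.uIcc_of_le hε1]; intro h; exact absurd h.1 (not_le.mpr hε0)
  have hzp : ∀ y : ℝ, (y^(k+1))⁻¹ = y ^ (-(k+1:ℕ):ℤ) := fun y => by
    rw [zpow_neg, zpow_natCast]
  have hS2 : ‖(∫ y in Set.Ioc ε 1, f y) - (((k:ℝ)⁻¹ * Real.log lam : ℝ):ℂ) * A‖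
      ≤ (L:ℝ)*(2*R) + (L:ℝ)*(2*R)*R := by
    rw [hT, ← integral_sub hfi2 hAi]
    set bnd : ℝ → ℝ := fun y => (L:ℝ)*(2*R) + ((L:ℝ)*(2*R)*R*lam⁻¹) * (y^(k+1))⁻¹ with hbnddef
    have hptb : ∀ y ∈ Set.Ioc ε 1, ‖f y - ((y⁻¹:ℝ):ℂ) * A‖ ≤ bnd y := by
      intro y hy
      have hy0 : 0 < y := lt_trans hε0 hy.1
      have hcy : 0 < lam * y^k := hc y hy0
      have heq : f y - ((y⁻¹:ℝ):ℂ) * A = ((y⁻¹:ℝ):ℂ) * (G y - A) := by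
        rw [hfdef]; beta_reduce; ring
      rw [heq, norm_mul, Complex.norm_real, Real.norm_eq_abs, abs_inv, abs_of_pos hy0]
      have halg : y⁻¹ * (((L:ℝ) * (y + R * (lam * y^k)⁻¹)) * (2*R))
          = (L:ℝ)*(2*R) + ((L:ℝ)*(2*R)*R*lam⁻¹) * (y^(k+1))⁻¹ := by
        rw [pow_succ]
        field_simp
      calc y⁻¹ * ‖G y - A‖ ≤ y⁻¹ * (((L:ℝ) * (y + R * (lam * y^k)⁻¹)) * (2*R)) :=
            mul_le_mul_of_nonneg_left (hGA y hy0) (inv_nonneg.mpr hy0.le)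
        _ = bnd y := halg
    have hzcont : ContinuousOn (fun y : ℝ => (y^(k+1))⁻¹) (Set.Icc ε 1) := by
      apply ContinuousOn.inv₀ (continuous_pow _).continuousOn
      intro y hy
      exact pow_ne_zero _ (ne_of_gt (lt_of_lt_of_le hε0 hy.1))
    have hbint : IntegrableOn bnd (Set.Ioc ε 1) := by
      apply Integrable.add
      · exact integrableOn_const (by simp [Real.volume_Ioc])
      · exact ((hzcont.integrableOn_Icc).mono_set Set.Ioc_subset_Icc_self).const_mul _
    have h1 : ‖∫ y in Set.Ioc ε 1, (f y - ((y⁻¹:ℝ):ℂ) * A)‖ ≤ ∫ y in Set.Ioc ε 1, bnd y :=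
      norm_integral_le_of_norm_le hbint ((ae_restrict_iff' measurableSet_Ioc).mpr
        (Eventually.of_forall hptb))
    have hzint : ∫ y in ε..1, (y^(k+1))⁻¹ = (lam - 1)/k := by
      simp_rw [hzp]
      rw [integral_zpow (Or.inr ⟨by omega, h0u⟩)]
      have he1 : ((-(k+1:ℕ):ℤ)+1) = -(k:ℤ) := by push_cast; ring
      rw [he1, one_zpow, zpow_neg, zpow_natCast, hεk, inv_inv]
      push_cast
      field_simp
      rw [show (-((k:ℝ)+1)+1) = -(k:ℝ) by ring, div_neg, mul_div_assoc, div_self hkR.ne', mul_one, neg_sub]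
    have hbcalc : ∫ y in Set.Ioc ε 1, bnd y ≤ (L:ℝ)*(2*R) + (L:ℝ)*(2*R)*R := by
      rw [← intervalIntegral.integral_of_le hε1]
      have hii1 : IntervalIntegrable (fun _ : ℝ => (L:ℝ)*(2*R)) volume ε 1 :=
        intervalIntegrable_const
      have hii2 : IntervalIntegrable
          (fun y : ℝ => ((L:ℝ)*(2*R)*R*lam⁻¹) * (y^(k+1))⁻¹) volume ε 1 := by
        apply IntervalIntegrable.const_mul
        have h2' := intervalIntegral.intervalIntegrable_zpow (μ := volume) (a := ε) (b := 1)
          (n := (-(k+1:ℕ):ℤ)) (Or.inr h0u)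
        simpa only [← hzp] using h2'
      rw [intervalIntegral.integral_add hii1 hii2, intervalIntegral.integral_const,
        intervalIntegral.integral_const_mul, hzint]
      have hd : (lam-1)/k ≤ lam := by
        rw [div_le_iff₀ hkR]; nlinarith
      have h3 : lam⁻¹ * ((lam-1)/k) ≤ 1 := by
        calc lam⁻¹ * ((lam-1)/k) ≤ lam⁻¹ * lam :=
              mul_le_mul_of_nonneg_left hd (inv_nonneg.mpr hlam0.le)
          _ = 1 := inv_mul_cancel₀ hlam0.ne'
      have t1 : (1-ε) • ((L:ℝ)*(2*R)) ≤ (L:ℝ)*(2*R) := by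
        rw [smul_eq_mul]
        have hc0 : (0:ℝ) ≤ (L:ℝ)*(2*R) := by positivity
        nlinarith [mul_nonneg hε0.le hc0]
      have t2 : ((L:ℝ)*(2*R)*R*lam⁻¹)*((lam-1)/k) ≤ (L:ℝ)*(2*R)*R := by
        calc ((L:ℝ)*(2*R)*R*lam⁻¹)*((lam-1)/k)
            = ((L:ℝ)*(2*R)*R)*(lam⁻¹*((lam-1)/k)) := by ring
          _ ≤ ((L:ℝ)*(2*R)*R)*1 := by
              apply mul_le_mul_of_nonneg_left h3 (by positivity)
          _ = (L:ℝ)*(2*R)*R := mul_one _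
      exact add_le_add t1 t2
    exact le_trans h1 hbcalc
  -- final assembly
  have hfactor : (1 / (k : ℂ)) * ((lam⁻¹ * Real.log lam : ℝ) : ℂ) * A
      = ((lam⁻¹:ℝ):ℂ) * ((((k:ℝ)⁻¹ * Real.log lam : ℝ):ℂ) * A) := by
    push_cast
    ring
  have hST : ‖(∫ y in Set.Ioi (0:ℝ), f y) - (((k:ℝ)⁻¹ * Real.log lam : ℝ):ℂ) * A‖ ≤ C := by
    rw [hsplit]
    have hre2 : (∫ y in Set.Ioc (0:ℝ) ε, f y) +
        ((∫ y in Set.Ioc ε 1, f y) + (∫ y in Set.Ioi (1:ℝ), f y)) -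
          (((k:ℝ)⁻¹ * Real.log lam : ℝ):ℂ) * A
        = (∫ y in Set.Ioc (0:ℝ) ε, f y) +
        (((∫ y in Set.Ioc ε 1, f y) - (((k:ℝ)⁻¹ * Real.log lam : ℝ):ℂ) * A) +
          (∫ y in Set.Ioi (1:ℝ), f y)) := by ring
    rw [hre2]
    refine le_trans (norm_add_le _ _) ?_
    refine le_trans (add_le_add le_rfl (norm_add_le _ _)) ?_
    refine le_trans (add_le_add hS1 (add_le_add hS2 hS3)) ?_
    rw [hCdef]
    ring_nf
    exact le_refl _
  rw [hIeq, hfactor, ← mul_sub, norm_mul, Complex.norm_real, Real.norm_eq_abs,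
    mul_comm C]
  exact mul_le_mul_of_nonneg_left hST (abs_nonneg _)
end

section
/- For an integer k ≥ 1 let b_k(z) = (1−z) Π_{j=1}^{k} (j − kz) and let T = ∂_{y₂} ∂_{y₁}^k. Then: (i) for all y₁, y₂ > 0 and all z ∈ ℂ, T[(y₂ y₁^k)^{1−z}] = b_k(z) (y₂ y₁^k)^{−z} (Bernstein–Sato identity); (ii) for every smooth compactly supported f : ℝ² → ℂ and every z ∈ ℂ with Re z < 1/k and b_k(z) ≠ 0: ∫_{(0,∞)²} (y₂ y₁^k)^{−z} f(y₁,y₂) dy₁ dy₂ = ((−1)^{k+1} / b_k(z)) ∫_{(0,∞)²} (y₂ y₁^k)^{1−z} (T f)(y₁,y₂) dy₁ dy₂, both integrals being absolutely convergent. -/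
/- STATEMENT 4: Bernstein–Sato identity T[(y₂y₁^k)^{1−z}] = b_k(z)(y₂y₁^k)^{−z}
for T = ∂_{y₂}∂_{y₁}^k and b_k(z) = (1−z)∏_{j=1}^k (j−kz), together with the
integration-by-parts functional equation on (0,∞)² for Re z < 1/k, b_k(z) ≠ 0
(key step of Lemma "poles extensions"). Here (y₂y₁^k)^w := y₂^w y₁^{kw}. -/

open MeasureTheory

section BSauxSection

open Set Filter Topology Complex ContDiff

namespace BSaux



lemma hasDerivAt_cpow' {x : ℝ} (hx : x ≠ 0) (w : ℂ) :
    HasDerivAt (fun y : ℝ => (y : ℂ) ^ w) (w * (x : ℂ) ^ (w - 1)) x := by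
  rcases eq_or_ne w 0 with rfl | hw
  · have : HasDerivAt (fun _ : ℝ => (1 : ℂ)) 0 x := hasDerivAt_const x 1
    simpa [Complex.cpow_zero] using this
  · have h := hasDerivAt_ofReal_cpow_const' hx (show w - 1 ≠ -1 by
      intro h; apply hw; have := congrArg (· + 1) h; simpa using this)
    rw [sub_add_cancel] at h
    have h2 := h.const_mul w
    have : (fun y : ℝ => w * ((y : ℂ) ^ w / w)) = fun y : ℝ => (y : ℂ) ^ w := by
      funext y; rw [mul_div_cancel₀ _ hw]
    rw [this] at h2
    exact h2

lemma iteratedDeriv_cpow (w C : ℂ) (n : ℕ) :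
    ∀ x : ℝ, 0 < x → iteratedDeriv n (fun r : ℝ => C * (r : ℂ) ^ w) x
      = C * (∏ i ∈ Finset.range n, (w - i)) * (x : ℂ) ^ (w - n) := by
  induction n with
  | zero => intro x _; simp
  | succ n ih =>
    intro x hx
    rw [iteratedDeriv_succ]
    have hev : (fun y : ℝ => iteratedDeriv n (fun r : ℝ => C * (r : ℂ) ^ w) y)
        =ᶠ[𝓝 x] fun y : ℝ => (C * ∏ i ∈ Finset.range n, (w - i)) * (y : ℂ) ^ (w - n) := by
      filter_upwards [Ioi_mem_nhds hx] with y hy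
      rw [ih y hy]
    rw [hev.deriv_eq]
    rw [((hasDerivAt_cpow' (ne_of_gt hx) (w - n)).const_mul
      (C * ∏ i ∈ Finset.range n, (w - i))).deriv]
    rw [Finset.prod_range_succ]
    have : w - (n : ℂ) - 1 = w - ((n : ℕ) + 1 : ℕ) := by push_cast; ring
    rw [this]
    ring



lemma contOn_cpow (w : ℂ) : ContinuousOn (fun r : ℝ => (r : ℂ) ^ w) (Ioi 0) :=
  fun x hx => (continuousAt_ofReal_cpow_const x w (Or.inr (ne_of_gt hx))).continuousWithinAt

lemma exists_R {g : ℝ → ℂ} (hs : HasCompactSupport g) :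
    ∃ R : ℝ, 0 < R ∧ ∀ x : ℝ, R < |x| → g x = 0 := by
  obtain ⟨R, hR0, hR⟩ := hs.isBounded.subset_closedBall_lt 0 0
  refine ⟨R, hR0, fun x hx => ?_⟩
  apply image_eq_zero_of_notMem_tsupport
  intro hmem
  have := hR hmem
  rw [Metric.mem_closedBall, Real.dist_eq, sub_zero] at this
  linarith

lemma intgOn (w : ℂ) (hw : -1 < w.re) (g : ℝ → ℂ) (hg : Continuous g)
    (hs : HasCompactSupport g) :
    IntegrableOn (fun r : ℝ => (r : ℂ) ^ w * g r) (Ioi 0) := by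
  obtain ⟨C, hC⟩ := hs.exists_bound_of_continuous hg
  obtain ⟨R, hR0, hR⟩ := exists_R hs
  have h1 : IntegrableOn (fun r : ℝ => (r : ℂ) ^ w * g r) (Ioc 0 R) := by
    have hb : IntegrableOn (fun r : ℝ => C * r ^ w.re) (Ioc 0 R) := by
      exact ((intervalIntegral.intervalIntegrable_rpow' (a := 0) (b := R) hw).1).const_mul C
    apply Integrable.mono' hb
    · exact (((contOn_cpow w).mono Ioc_subset_Ioi_self).mul hg.continuousOn).aestronglyMeasurable
        measurableSet_Ioc
    · filter_upwards [ae_restrict_mem measurableSet_Ioc] with r hr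
      rw [norm_mul, norm_cpow_eq_rpow_re_of_pos hr.1, mul_comm C]
      exact mul_le_mul_of_nonneg_left (hC r) (Real.rpow_nonneg hr.1.le _)
  have h2 : IntegrableOn (fun r : ℝ => (r : ℂ) ^ w * g r) (Ioi R) := by
    rw [integrableOn_congr_fun (g := fun _ => (0 : ℂ)) ?_ measurableSet_Ioi]
    · exact integrableOn_zero
    · intro x hx
      have hx' : R < |x| := by
        rw [abs_of_pos (hR0.trans hx)]; exact hx
      simp [hR x hx']
  exact (h1.union h2).mono_set (by rw [Set.Ioc_union_Ioi_eq_Ioi hR0.le])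

lemma one_le_inf : (1 : WithTop ℕ∞) ≤ ∞ := by exact_mod_cast le_top

lemma ibp_one (w : ℂ) (hw : -1 < w.re) (g : ℝ → ℂ) (hg : ContDiff ℝ ∞ g)
    (hs : HasCompactSupport g) :
    ∫ r in Ioi (0:ℝ), (r : ℂ) ^ w * g r
      = (-(w + 1)⁻¹) * ∫ r in Ioi (0:ℝ), (r : ℂ) ^ (w + 1) * deriv g r := by
  have hw1re : 0 < (w + 1).re := by simp [Complex.add_re]; linarith
  have hw1 : w + 1 ≠ 0 := by
    intro h; rw [h] at hw1re; simp at hw1re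
  have hgd : Continuous (deriv g) := hg.continuous_deriv one_le_inf
  have int1 : IntegrableOn (fun r : ℝ => (r : ℂ) ^ w * g r) (Ioi 0) :=
    intgOn w hw g hg.continuous hs
  have int2 : IntegrableOn (fun r : ℝ => (r : ℂ) ^ (w + 1) * deriv g r) (Ioi 0) :=
    intgOn (w + 1) (by simp [Complex.add_re]; linarith) (deriv g) hgd hs.deriv
  set h : ℝ → ℂ := fun r => (w + 1)⁻¹ * ((r : ℂ) ^ (w + 1) * g r) with hh
  have hderiv : ∀ x ∈ Ioi (0:ℝ), HasDerivAt h
      ((x : ℂ) ^ w * g x + (w + 1)⁻¹ * ((x : ℂ) ^ (w + 1) * deriv g x)) x := by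
    intro x hx
    have h1 : HasDerivAt (fun r : ℝ => (r : ℂ) ^ (w + 1)) ((w + 1) * (x : ℂ) ^ w) x := by
      have := hasDerivAt_cpow' (ne_of_gt hx) (w + 1)
      rw [add_sub_cancel_right] at this
      exact this
    have h2 : HasDerivAt g (deriv g x) x :=
      ((hg.differentiable (by simp)) x).hasDerivAt
    have h3 := (h1.mul h2).const_mul ((w + 1)⁻¹)
    refine h3.congr_deriv ?_
    have hinv := inv_mul_cancel₀ hw1
    linear_combination ((x : ℂ) ^ w * g x) * hinv
  have hcont : ContinuousWithinAt h (Ici 0) 0 := by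
    apply ContinuousAt.continuousWithinAt
    exact (continuousAt_const.mul ((continuousAt_ofReal_cpow_const 0 (w + 1)
      (Or.inl hw1re)).mul hg.continuous.continuousAt))
  have hlim : Tendsto h atTop (𝓝 0) := by
    obtain ⟨R, hR0, hR⟩ := exists_R hs
    have : h =ᶠ[atTop] fun _ => (0 : ℂ) := by
      filter_upwards [eventually_gt_atTop R] with x hx
      have : g x = 0 := hR x (by rw [abs_of_pos (hR0.trans hx)]; exact hx)
      simp [hh, this]
    rw [tendsto_congr' this]
    exact tendsto_const_nhds
  have key := integral_Ioi_of_hasDerivAt_of_tendsto hcont hderiv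
    (int1.add (int2.const_mul _)) hlim
  have h0 : h 0 = 0 := by
    simp [hh, Complex.ofReal_zero, Complex.zero_cpow hw1]
  rw [h0, sub_zero] at key
  rw [integral_add int1 (int2.const_mul _), integral_const_mul] at key
  have := congrArg (fun t : ℂ => t - (w + 1)⁻¹ * ∫ r in Ioi (0:ℝ), (r : ℂ) ^ (w + 1) * deriv g r) key
  simp only [add_sub_cancel_right, zero_sub] at this
  rw [this]
  ring

lemma ibp_iter (k : ℕ) : ∀ (w : ℂ), -1 < w.re → ∀ (g : ℝ → ℂ), ContDiff ℝ ∞ g →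
    HasCompactSupport g →
    ∫ r in Ioi (0:ℝ), (r : ℂ) ^ w * g r
      = (∏ i ∈ Finset.range k, (-(w + i + 1)⁻¹)) *
          ∫ r in Ioi (0:ℝ), (r : ℂ) ^ (w + k) * iteratedDeriv k g r := by
  induction k with
  | zero => intro w hw g _ _; simp
  | succ k ih =>
    intro w hw g hg hs
    have hg' : ContDiff ℝ ∞ (deriv g) := (contDiff_infty_iff_deriv.mp hg).2
    rw [ibp_one w hw g hg hs,
      ih (w + 1) (by simp [Complex.add_re]; linarith) (deriv g) hg' hs.deriv]
    have hexp : (fun r : ℝ => (r : ℂ) ^ (w + 1 + (k:ℂ)) * iteratedDeriv k (deriv g) r)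
        = fun r : ℝ => (r : ℂ) ^ (w + ((k+1 : ℕ) : ℂ)) * iteratedDeriv (k+1) g r := by
      funext r
      rw [← iteratedDeriv_succ']
      congr 2
      push_cast; ring
    rw [hexp, Finset.prod_range_succ']
    have hP : (∏ i ∈ Finset.range k, (-(w + ((i+1 : ℕ):ℂ) + 1)⁻¹))
        = ∏ i ∈ Finset.range k, (-(w + 1 + (i:ℂ) + 1)⁻¹) := by
      apply Finset.prod_congr rfl; intro i _; push_cast; ring_nf
    rw [hP]
    push_cast
    ring



noncomputable def D1 (F : ℝ × ℝ → ℂ) : ℝ × ℝ → ℂ := fun p => fderiv ℝ F p (1, 0)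
noncomputable def D2 (F : ℝ × ℝ → ℂ) : ℝ × ℝ → ℂ := fun p => fderiv ℝ F p (0, 1)

lemma contDiff_D1 {F : ℝ × ℝ → ℂ} (hF : ContDiff ℝ ∞ F) : ContDiff ℝ ∞ (D1 F) :=
  (hF.fderiv_right (le_refl _)).clm_apply contDiff_const

lemma contDiff_D2 {F : ℝ × ℝ → ℂ} (hF : ContDiff ℝ ∞ F) : ContDiff ℝ ∞ (D2 F) :=
  (hF.fderiv_right (le_refl _)).clm_apply contDiff_const

lemma hcs_D1 {F : ℝ × ℝ → ℂ} (hF : HasCompactSupport F) : HasCompactSupport (D1 F) :=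
  hF.fderiv_apply ℝ (1, 0)

lemma hcs_D2 {F : ℝ × ℝ → ℂ} (hF : HasCompactSupport F) : HasCompactSupport (D2 F) :=
  hF.fderiv_apply ℝ (0, 1)

lemma contDiff_D1_iter {F : ℝ × ℝ → ℂ} (hF : ContDiff ℝ ∞ F) (n : ℕ) :
    ContDiff ℝ ∞ (D1^[n] F) := by
  induction n with
  | zero => exact hF
  | succ n ih => rw [Function.iterate_succ_apply']; exact contDiff_D1 ih

lemma hcs_D1_iter {F : ℝ × ℝ → ℂ} (hF : HasCompactSupport F) (n : ℕ) :
    HasCompactSupport (D1^[n] F) := by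
  induction n with
  | zero => exact hF
  | succ n ih => rw [Function.iterate_succ_apply']; exact hcs_D1 ih

lemma one_le_inf' : (1 : WithTop ℕ∞) ≤ ∞ := by exact_mod_cast le_top

lemma hasDerivAt_slice1 {F : ℝ × ℝ → ℂ} (hF : ContDiff ℝ ∞ F) (p : ℝ × ℝ) :
    HasDerivAt (fun r : ℝ => F (r, p.2)) (D1 F p) p.1 := by
  obtain ⟨p1, p2⟩ := p
  have hdF : HasFDerivAt F (fderiv ℝ F (p1, p2)) ((p1, p2) : ℝ × ℝ) :=
    ((hF.differentiable (by simp)) (p1, p2)).hasFDerivAt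
  have hline : HasDerivAt (fun r : ℝ => ((r, p2) : ℝ × ℝ)) ((1, 0) : ℝ × ℝ) p1 :=
    (hasDerivAt_id p1).prodMk (hasDerivAt_const p1 p2)
  have := hdF.comp_hasDerivAt (x := p1) hline
  simpa [Function.comp_def, D1] using this

lemma hasDerivAt_slice2 {F : ℝ × ℝ → ℂ} (hF : ContDiff ℝ ∞ F) (p : ℝ × ℝ) :
    HasDerivAt (fun s : ℝ => F (p.1, s)) (D2 F p) p.2 := by
  obtain ⟨p1, p2⟩ := p
  have hdF : HasFDerivAt F (fderiv ℝ F (p1, p2)) ((p1, p2) : ℝ × ℝ) :=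
    ((hF.differentiable (by simp)) (p1, p2)).hasFDerivAt
  have hline : HasDerivAt (fun s : ℝ => ((p1, s) : ℝ × ℝ)) ((0, 1) : ℝ × ℝ) p2 :=
    (hasDerivAt_const p2 p1).prodMk (hasDerivAt_id p2)
  have := hdF.comp_hasDerivAt (x := p2) hline
  simpa [Function.comp_def, D2] using this

lemma iteratedDeriv_slice {F : ℝ × ℝ → ℂ} (hF : ContDiff ℝ ∞ F) (n : ℕ) :
    ∀ (s r : ℝ), iteratedDeriv n (fun r' : ℝ => F (r', s)) r = (D1^[n] F) (r, s) := by
  induction n with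
  | zero => intro s r; simp
  | succ n ih =>
    intro s r
    rw [iteratedDeriv_succ]
    have : iteratedDeriv n (fun r' : ℝ => F (r', s))
        = fun r' : ℝ => (D1^[n] F) (r', s) := funext (ih s)
    rw [this, Function.iterate_succ_apply']
    exact (hasDerivAt_slice1 (contDiff_D1_iter hF n) (r, s)).deriv

lemma slice1_smooth {F : ℝ × ℝ → ℂ} (hF : ContDiff ℝ ∞ F) (s : ℝ) :
    ContDiff ℝ ∞ (fun r : ℝ => F (r, s)) :=
  hF.comp (contDiff_id.prodMk contDiff_const)

lemma slice2_smooth {F : ℝ × ℝ → ℂ} (hF : ContDiff ℝ ∞ F) (r : ℝ) :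
    ContDiff ℝ ∞ (fun s : ℝ => F (r, s)) :=
  hF.comp (contDiff_const.prodMk contDiff_id)

lemma slice1_cpt {F : ℝ × ℝ → ℂ} (hs : HasCompactSupport F) (s : ℝ) :
    HasCompactSupport (fun r : ℝ => F (r, s)) := by
  apply HasCompactSupport.intro (hs.isCompact.image continuous_fst)
  intro r hr
  by_contra h
  exact hr ⟨(r, s), subset_tsupport _ h, rfl⟩

lemma slice2_cpt {F : ℝ × ℝ → ℂ} (hs : HasCompactSupport F) (r : ℝ) :
    HasCompactSupport (fun s : ℝ => F (r, s)) := by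
  apply HasCompactSupport.intro (hs.isCompact.image continuous_snd)
  intro s hs'
  by_contra h
  exact hs' ⟨(r, s), subset_tsupport _ h, rfl⟩

lemma intg2 (a b : ℂ) (ha : -1 < a.re) (hb : -1 < b.re) (F : ℝ × ℝ → ℂ)
    (hF : Continuous F) (hs : HasCompactSupport F) :
    IntegrableOn (fun p : ℝ × ℝ => ((p.2 : ℂ) ^ b) * ((p.1 : ℂ) ^ a) * F p)
      (Ioi (0:ℝ) ×ˢ Ioi (0:ℝ)) := by
  obtain ⟨C, hC⟩ := hs.exists_bound_of_continuous hF
  have hC0 : 0 ≤ C := le_trans (norm_nonneg _) (hC (0, 0))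
  obtain ⟨R, hR0, hR⟩ := hs.isBounded.subset_closedBall_lt 0 0
  have hvanish : ∀ p : ℝ × ℝ, F p ≠ 0 → |p.1| ≤ R ∧ |p.2| ≤ R := by
    intro p hp
    have hmem : p ∈ tsupport F := subset_tsupport _ hp
    have := hR hmem
    rw [Metric.mem_closedBall, dist_zero_right, Prod.norm_def] at this
    constructor
    · exact le_trans (le_max_left _ _) this
    · exact le_trans (le_max_right _ _) this
  have g1int : Integrable ((Ioc (0:ℝ) R).indicator (fun r : ℝ => r ^ a.re))
      (volume.restrict (Ioi (0:ℝ))) := by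
    apply Integrable.restrict
    apply (IntegrableOn.integrable_indicator · measurableSet_Ioc)
    exact (intervalIntegral.intervalIntegrable_rpow' (a := 0) (b := R) ha).1
  have g2int : Integrable ((Ioc (0:ℝ) R).indicator (fun s : ℝ => C * s ^ b.re))
      (volume.restrict (Ioi (0:ℝ))) := by
    apply Integrable.restrict
    apply (IntegrableOn.integrable_indicator · measurableSet_Ioc)
    exact ((intervalIntegral.intervalIntegrable_rpow' (a := 0) (b := R) hb).1).const_mul C
  rw [IntegrableOn, Measure.volume_eq_prod, ← Measure.prod_restrict]
  apply Integrable.mono' (g1int.mul_prod g2int)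
  · apply AEStronglyMeasurable.mono_measure (μ := (volume.restrict (Ioi (0:ℝ) ×ˢ Ioi (0:ℝ))))
    swap
    · rw [Measure.prod_restrict, ← Measure.volume_eq_prod]
    · apply ContinuousOn.aestronglyMeasurable _ (measurableSet_Ioi.prod measurableSet_Ioi)
      apply ContinuousOn.mul _ hF.continuousOn
      apply ContinuousOn.mul
      · intro p hp
        exact ((continuousAt_ofReal_cpow_const p.2 b
          (Or.inr (ne_of_gt hp.2))).comp continuousAt_snd).continuousWithinAt
      · intro p hp
        exact ((continuousAt_ofReal_cpow_const p.1 a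
          (Or.inr (ne_of_gt hp.1))).comp continuousAt_fst).continuousWithinAt
  · rw [Measure.prod_restrict]
    filter_upwards [ae_restrict_mem (measurableSet_Ioi.prod measurableSet_Ioi)] with p hp
    obtain ⟨hp1, hp2⟩ : p.1 ∈ Ioi (0:ℝ) ∧ p.2 ∈ Ioi (0:ℝ) := ⟨hp.1, hp.2⟩
    by_cases hFp : F p = 0
    · rw [hFp, mul_zero, norm_zero]
      apply mul_nonneg
      · apply Set.indicator_nonneg
        intro r hr; exact Real.rpow_nonneg hr.1.le _
      · apply Set.indicator_nonneg
        intro s hsr; exact mul_nonneg hC0 (Real.rpow_nonneg hsr.1.le _)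
    · obtain ⟨hpr1, hpr2⟩ := hvanish p hFp
      have hm1 : p.1 ∈ Ioc (0:ℝ) R := ⟨hp1, by rwa [abs_of_pos hp1] at hpr1⟩
      have hm2 : p.2 ∈ Ioc (0:ℝ) R := ⟨hp2, by rwa [abs_of_pos hp2] at hpr2⟩
      rw [Set.indicator_of_mem hm1, Set.indicator_of_mem hm2]
      rw [norm_mul, norm_mul,
        norm_cpow_eq_rpow_re_of_pos hp2, norm_cpow_eq_rpow_re_of_pos hp1]
      calc p.2 ^ b.re * p.1 ^ a.re * ‖F p‖
          ≤ p.2 ^ b.re * p.1 ^ a.re * C := by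
            apply mul_le_mul_of_nonneg_left (hC p)
            exact mul_nonneg (Real.rpow_nonneg hp2.le _) (Real.rpow_nonneg hp1.le _)
        _ = p.1 ^ a.re * (C * p.2 ^ b.re) := by ring

lemma prodInt (F : ℝ × ℝ → ℂ) (hF : IntegrableOn F (Ioi (0:ℝ) ×ˢ Ioi (0:ℝ))) :
    ∫ p in Ioi (0:ℝ) ×ˢ Ioi (0:ℝ), F p
      = ∫ r in Ioi (0:ℝ), ∫ s in Ioi (0:ℝ), F (r, s) := by
  rw [Measure.volume_eq_prod] at hF ⊢
  exact setIntegral_prod F hF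

lemma swapInt (F : ℝ × ℝ → ℂ) (hF : IntegrableOn F (Ioi (0:ℝ) ×ˢ Ioi (0:ℝ))) :
    ∫ r in Ioi (0:ℝ), ∫ s in Ioi (0:ℝ), F (r, s)
      = ∫ s in Ioi (0:ℝ), ∫ r in Ioi (0:ℝ), F (r, s) := by
  apply integral_integral_swap (f := fun r s => F (r, s))
  rw [Measure.prod_restrict]
  rw [IntegrableOn, Measure.volume_eq_prod] at hF
  exact hF

lemma prod_eq (k : ℕ) (z : ℂ) :
    ∏ i ∈ Finset.range k, ((k : ℂ) * (1 - z) - i)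
      = ∏ j ∈ Finset.Icc 1 k, ((j : ℂ) - (k : ℂ) * z) := by
  rw [show Finset.Icc 1 k = Finset.Ico 1 (k + 1) by rw [Finset.Ico_add_one_right_eq_Icc],
    Finset.prod_Ico_eq_prod_range]
  simp only [Nat.add_sub_cancel]
  rw [← Finset.prod_range_reflect]
  apply Finset.prod_congr rfl
  intro i hi
  have hik : i < k := Finset.mem_range.mp hi
  have h1 : ((k - 1 - i : ℕ) : ℂ) = (k : ℂ) - 1 - i := by
    have : ((k - 1 - i : ℕ) : ℝ) = (k : ℝ) - 1 - i := by
      rw [Nat.cast_sub (by omega), Nat.cast_sub (by omega)]; push_cast; ring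
    have := congrArg (Complex.ofReal) this
    push_cast at this ⊢
    exact_mod_cast this
  rw [h1]
  push_cast
  ring

lemma prod_eq2 (k : ℕ) (z : ℂ) :
    ∏ i ∈ Finset.range k, (-(-((k : ℂ) * z) + i + 1)⁻¹)
      = (-1 : ℂ) ^ k / ∏ j ∈ Finset.Icc 1 k, ((j : ℂ) - (k : ℂ) * z) := by
  rw [show Finset.Icc 1 k = Finset.Ico 1 (k + 1) by rw [Finset.Ico_add_one_right_eq_Icc],
    Finset.prod_Ico_eq_prod_range]
  simp only [Nat.add_sub_cancel]
  rw [div_eq_mul_inv, ← Finset.prod_inv_distrib]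
  rw [show ((-1 : ℂ) ^ k) = ∏ _i ∈ Finset.range k, (-1 : ℂ) by
    rw [Finset.prod_const, Finset.card_range]]
  rw [← Finset.prod_mul_distrib]
  apply Finset.prod_congr rfl
  intro i _
  push_cast
  rw [show ((1 : ℂ) + i - k * z) = -((k : ℂ) * z) + i + 1 by ring]
  ring


lemma hasDerivAt_slice2' {F : ℝ × ℝ → ℂ} (hF : ContDiff ℝ ∞ F) (r s : ℝ) :
    HasDerivAt (fun s' : ℝ => F (r, s')) (D2 F (r, s)) s :=
  hasDerivAt_slice2 hF (r, s)

end BSaux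

end BSauxSection

section Part2

open Set Filter Topology Complex ContDiff BSaux

lemma BSaux.functional_eq (k : ℕ) (hk : 1 ≤ k) (z : ℂ) (hz : z.re < 1 / (k : ℝ))
    (hbkz : (1 - z) * ∏ j ∈ Finset.Icc 1 k, ((j : ℂ) - (k : ℂ) * z) ≠ 0)
    (F : ℝ × ℝ → ℂ) (hFsm : ContDiff ℝ ∞ F) (hFcs : HasCompactSupport F) :
    IntegrableOn (fun p : ℝ × ℝ => ((p.2 : ℂ) ^ (-z)) * ((p.1 : ℂ) ^ (-((k : ℂ) * z))) * F p)
      (Ioi (0:ℝ) ×ˢ Ioi (0:ℝ)) ∧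
    IntegrableOn (fun p : ℝ × ℝ => ((p.2 : ℂ) ^ ((1:ℂ) - z)) * ((p.1 : ℂ) ^ ((k : ℂ) * ((1:ℂ) - z))) *
        (D2 (D1^[k] F)) p) (Ioi (0:ℝ) ×ˢ Ioi (0:ℝ)) ∧
    (∫ p in Ioi (0:ℝ) ×ˢ Ioi (0:ℝ), ((p.2 : ℂ) ^ (-z)) * ((p.1 : ℂ) ^ (-((k : ℂ) * z))) * F p)
      = ((-1 : ℂ) ^ (k + 1) / ((1 - z) * ∏ j ∈ Finset.Icc 1 k, ((j : ℂ) - (k : ℂ) * z))) *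
        ∫ p in Ioi (0:ℝ) ×ˢ Ioi (0:ℝ),
          ((p.2 : ℂ) ^ ((1:ℂ) - z)) * ((p.1 : ℂ) ^ ((k : ℂ) * ((1:ℂ) - z))) * (D2 (D1^[k] F)) p := by
  have hk0 : (0:ℝ) < k := by exact_mod_cast hk
  have hk1 : (1:ℝ) ≤ k := by exact_mod_cast hk
  have hzk : (k:ℝ) * z.re < 1 := by
    have h := (lt_div_iff₀ hk0).mp hz
    linarith [h]
  have hz1 : z.re < 1 := by
    have hdiv : 1 / (k:ℝ) ≤ 1 := by
      rw [div_le_one hk0]; exact hk1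
    linarith
  have ha0 : -1 < (-((k : ℂ) * z)).re := by
    simp only [Complex.neg_re, Complex.mul_re, Complex.natCast_re, Complex.natCast_im,
      zero_mul, sub_zero]
    linarith
  have hb0 : -1 < (-z).re := by
    simp only [Complex.neg_re]; linarith
  have ha1 : -1 < (-((k : ℂ) * z) + (k : ℕ)).re := by
    simp only [Complex.add_re, Complex.neg_re, Complex.mul_re, Complex.natCast_re,
      Complex.natCast_im, zero_mul, sub_zero]
    nlinarith
  have hb1 : -1 < ((-z) + 1).re := by
    simp only [Complex.add_re, Complex.neg_re, Complex.one_re]; linarith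
  have hGsm : ContDiff ℝ ∞ (D1^[k] F) := contDiff_D1_iter hFsm k
  have hGcs : HasCompactSupport (D1^[k] F) := hcs_D1_iter hFcs k
  have hHcont : Continuous (D2 (D1^[k] F)) := (contDiff_D2 hGsm).continuous
  have hHcs : HasCompactSupport (D2 (D1^[k] F)) := hcs_D2 hGcs
  have I₁ : IntegrableOn
      (fun p : ℝ × ℝ => ((p.2 : ℂ) ^ (-z)) * ((p.1 : ℂ) ^ (-((k : ℂ) * z))) * F p)
      (Ioi (0:ℝ) ×ˢ Ioi (0:ℝ)) :=
    intg2 (-((k : ℂ) * z)) (-z) ha0 hb0 F hFsm.continuous hFcs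
  have I₂' : IntegrableOn
      (fun p : ℝ × ℝ => ((p.2 : ℂ) ^ (-z)) * ((p.1 : ℂ) ^ (-((k : ℂ) * z) + (k:ℕ))) *
        (D1^[k] F) p) (Ioi (0:ℝ) ×ˢ Ioi (0:ℝ)) :=
    intg2 (-((k : ℂ) * z) + (k:ℕ)) (-z) ha1 hb0 _ hGsm.continuous hGcs
  have I₂ : IntegrableOn
      (fun p : ℝ × ℝ => ((p.2 : ℂ) ^ ((-z) + 1)) * ((p.1 : ℂ) ^ (-((k : ℂ) * z) + (k:ℕ))) *
        (D2 (D1^[k] F)) p) (Ioi (0:ℝ) ×ˢ Ioi (0:ℝ)) :=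
    intg2 (-((k : ℂ) * z) + (k:ℕ)) ((-z) + 1) ha1 hb1 _ hHcont hHcs
  have hshape : (fun p : ℝ × ℝ => ((p.2 : ℂ) ^ ((1:ℂ) - z)) * ((p.1 : ℂ) ^ ((k : ℂ) * ((1:ℂ) - z))) *
        (D2 (D1^[k] F)) p)
      = fun p : ℝ × ℝ => ((p.2 : ℂ) ^ ((-z) + 1)) * ((p.1 : ℂ) ^ (-((k : ℂ) * z) + (k:ℕ))) *
        (D2 (D1^[k] F)) p := by
    funext p
    rw [show ((k : ℂ) * ((1:ℂ) - z)) = -((k : ℂ) * z) + (k:ℕ) by ring,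
      show ((1:ℂ) - z) = (-z) + 1 by ring]
  refine ⟨I₁, by rw [hshape]; exact I₂, ?_⟩
  rw [hshape]
  have h1z : (1 - z) ≠ 0 := left_ne_zero_of_mul hbkz
  have hP : (∏ j ∈ Finset.Icc 1 k, ((j : ℂ) - (k : ℂ) * z)) ≠ 0 := right_ne_zero_of_mul hbkz
  calc
    (∫ p in Ioi (0:ℝ) ×ˢ Ioi (0:ℝ), ((p.2 : ℂ) ^ (-z)) * ((p.1 : ℂ) ^ (-((k : ℂ) * z))) * F p)
      = ∫ r in Ioi (0:ℝ), ∫ s in Ioi (0:ℝ),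
          ((s : ℂ) ^ (-z)) * ((r : ℂ) ^ (-((k : ℂ) * z))) * F (r, s) := prodInt _ I₁
    _ = ∫ s in Ioi (0:ℝ), ∫ r in Ioi (0:ℝ),
          ((s : ℂ) ^ (-z)) * ((r : ℂ) ^ (-((k : ℂ) * z))) * F (r, s) := swapInt _ I₁
    _ = ∫ s in Ioi (0:ℝ), ((s : ℂ) ^ (-z)) *
          ((∏ i ∈ Finset.range k, (-(-((k : ℂ) * z) + i + 1)⁻¹)) *
            ∫ r in Ioi (0:ℝ), ((r : ℂ) ^ (-((k : ℂ) * z) + (k:ℕ))) * (D1^[k] F) (r, s)) := by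
        congr 1
        funext s
        rw [show (fun r : ℝ => ((s : ℂ) ^ (-z)) * ((r : ℂ) ^ (-((k : ℂ) * z))) * F (r, s))
            = fun r : ℝ => ((s : ℂ) ^ (-z)) * (((r : ℂ) ^ (-((k : ℂ) * z))) * F (r, s))
          from funext fun r => by ring]
        rw [MeasureTheory.integral_const_mul]
        congr 1
        rw [ibp_iter k (-((k : ℂ) * z)) ha0 (fun r => F (r, s))
          (slice1_smooth hFsm s) (slice1_cpt hFcs s)]
        congr 1
        rw [show (fun r : ℝ => ((r : ℂ) ^ (-((k : ℂ) * z) + (k:ℕ))) *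
              iteratedDeriv k (fun r' : ℝ => F (r', s)) r)
            = fun r : ℝ => ((r : ℂ) ^ (-((k : ℂ) * z) + (k:ℕ))) * (D1^[k] F) (r, s)
          from funext fun r => by rw [iteratedDeriv_slice hFsm k s r]]
    _ = (∏ i ∈ Finset.range k, (-(-((k : ℂ) * z) + i + 1)⁻¹)) *
          ∫ s in Ioi (0:ℝ), ∫ r in Ioi (0:ℝ),
            ((s : ℂ) ^ (-z)) * ((r : ℂ) ^ (-((k : ℂ) * z) + (k:ℕ))) * (D1^[k] F) (r, s) := by
        rw [show (fun s : ℝ => ((s : ℂ) ^ (-z)) *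
              ((∏ i ∈ Finset.range k, (-(-((k : ℂ) * z) + i + 1)⁻¹)) *
                ∫ r in Ioi (0:ℝ), ((r : ℂ) ^ (-((k : ℂ) * z) + (k:ℕ))) * (D1^[k] F) (r, s)))
            = fun s : ℝ => (∏ i ∈ Finset.range k, (-(-((k : ℂ) * z) + i + 1)⁻¹)) *
              (((s : ℂ) ^ (-z)) *
                ∫ r in Ioi (0:ℝ), ((r : ℂ) ^ (-((k : ℂ) * z) + (k:ℕ))) * (D1^[k] F) (r, s))
          from funext fun s => by ring]
        rw [MeasureTheory.integral_const_mul]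
        congr 1
        congr 1
        funext s
        rw [← MeasureTheory.integral_const_mul]
        congr 1
        funext r
        ring
    _ = (∏ i ∈ Finset.range k, (-(-((k : ℂ) * z) + i + 1)⁻¹)) *
          ∫ r in Ioi (0:ℝ), ∫ s in Ioi (0:ℝ),
            ((s : ℂ) ^ (-z)) * ((r : ℂ) ^ (-((k : ℂ) * z) + (k:ℕ))) * (D1^[k] F) (r, s) := by
        rw [swapInt _ I₂']
    _ = (∏ i ∈ Finset.range k, (-(-((k : ℂ) * z) + i + 1)⁻¹)) *
          ∫ r in Ioi (0:ℝ), ((r : ℂ) ^ (-((k : ℂ) * z) + (k:ℕ))) *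
            ((-((-z) + 1)⁻¹) *
              ∫ s in Ioi (0:ℝ), ((s : ℂ) ^ ((-z) + 1)) * (D2 (D1^[k] F)) (r, s)) := by
        congr 1
        congr 1
        funext r
        rw [show (fun s : ℝ => ((s : ℂ) ^ (-z)) * ((r : ℂ) ^ (-((k : ℂ) * z) + (k:ℕ))) *
              (D1^[k] F) (r, s))
            = fun s : ℝ => ((r : ℂ) ^ (-((k : ℂ) * z) + (k:ℕ))) *
              (((s : ℂ) ^ (-z)) * (D1^[k] F) (r, s))
          from funext fun s => by ring]
        rw [MeasureTheory.integral_const_mul]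
        congr 1
        rw [ibp_one (-z) hb0 (fun s => (D1^[k] F) (r, s))
          (slice2_smooth hGsm r) (slice2_cpt hGcs r)]
        congr 1
        rw [show (fun s : ℝ => ((s : ℂ) ^ ((-z) + 1)) *
              deriv (fun s' : ℝ => (D1^[k] F) (r, s')) s)
            = fun s : ℝ => ((s : ℂ) ^ ((-z) + 1)) * (D2 (D1^[k] F)) (r, s)
          from funext fun s => by rw [(hasDerivAt_slice2' hGsm r s).deriv]]
    _ = (∏ i ∈ Finset.range k, (-(-((k : ℂ) * z) + i + 1)⁻¹)) * ((-((-z) + 1)⁻¹) *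
          ∫ r in Ioi (0:ℝ), ∫ s in Ioi (0:ℝ),
            ((s : ℂ) ^ ((-z) + 1)) * ((r : ℂ) ^ (-((k : ℂ) * z) + (k:ℕ))) *
              (D2 (D1^[k] F)) (r, s)) := by
        congr 1
        rw [show (fun r : ℝ => ((r : ℂ) ^ (-((k : ℂ) * z) + (k:ℕ))) *
              ((-((-z) + 1)⁻¹) *
                ∫ s in Ioi (0:ℝ), ((s : ℂ) ^ ((-z) + 1)) * (D2 (D1^[k] F)) (r, s)))
            = fun r : ℝ => (-((-z) + 1)⁻¹) * (((r : ℂ) ^ (-((k : ℂ) * z) + (k:ℕ))) *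
                ∫ s in Ioi (0:ℝ), ((s : ℂ) ^ ((-z) + 1)) * (D2 (D1^[k] F)) (r, s))
          from funext fun r => by ring]
        rw [MeasureTheory.integral_const_mul]
        congr 1
        congr 1
        funext r
        rw [← MeasureTheory.integral_const_mul]
        congr 1
        funext s
        ring
    _ = (∏ i ∈ Finset.range k, (-(-((k : ℂ) * z) + i + 1)⁻¹)) * ((-((-z) + 1)⁻¹) *
          ∫ p in Ioi (0:ℝ) ×ˢ Ioi (0:ℝ),
            ((p.2 : ℂ) ^ ((-z) + 1)) * ((p.1 : ℂ) ^ (-((k : ℂ) * z) + (k:ℕ))) *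
              (D2 (D1^[k] F)) p) := by
        rw [prodInt _ I₂]
    _ = ((-1 : ℂ) ^ (k + 1) / ((1 - z) * ∏ j ∈ Finset.Icc 1 k, ((j : ℂ) - (k : ℂ) * z))) *
          ∫ p in Ioi (0:ℝ) ×ˢ Ioi (0:ℝ),
            ((p.2 : ℂ) ^ ((-z) + 1)) * ((p.1 : ℂ) ^ (-((k : ℂ) * z) + (k:ℕ))) *
              (D2 (D1^[k] F)) p := by
        rw [← mul_assoc]
        congr 1
        rw [prod_eq2 k z, pow_succ, show ((-z : ℂ) + 1) = 1 - z by ring]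
        field_simp

end Part2

theorem bernstein_sato_identity_and_functional_equation
    (k : ℕ) (hk : 1 ≤ k) (bk : ℂ → ℂ)
    (hbk : ∀ z : ℂ, bk z = (1 - z) * ∏ j ∈ Finset.Icc 1 k, ((j : ℂ) - (k : ℂ) * z)) :
    -- (i) the pointwise Bernstein–Sato identity
    (∀ y₁ y₂ : ℝ, 0 < y₁ → 0 < y₂ → ∀ z : ℂ,
      deriv (fun s : ℝ =>
          iteratedDeriv k
            (fun r : ℝ => ((s : ℂ) ^ ((1 : ℂ) - z)) * ((r : ℂ) ^ ((k : ℂ) * ((1 : ℂ) - z))))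
            y₁) y₂
        = bk z * ((y₂ : ℂ) ^ (-z)) * ((y₁ : ℂ) ^ (-((k : ℂ) * z)))) ∧
    -- (ii) the functional equation obtained by k+1 integrations by parts
    (∀ f : ℝ → ℝ → ℂ,
      ContDiff ℝ (⊤ : ℕ∞) (fun p : ℝ × ℝ => f p.1 p.2) →
      HasCompactSupport (fun p : ℝ × ℝ => f p.1 p.2) →
      ∀ z : ℂ, z.re < 1 / (k : ℝ) → bk z ≠ 0 →
        IntegrableOn
          (fun p : ℝ × ℝ =>
            ((p.2 : ℂ) ^ (-z)) * ((p.1 : ℂ) ^ (-((k : ℂ) * z))) * f p.1 p.2)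
          (Set.Ioi (0 : ℝ) ×ˢ Set.Ioi (0 : ℝ)) ∧
        IntegrableOn
          (fun p : ℝ × ℝ =>
            ((p.2 : ℂ) ^ ((1 : ℂ) - z)) * ((p.1 : ℂ) ^ ((k : ℂ) * ((1 : ℂ) - z))) *
              deriv (fun s : ℝ => iteratedDeriv k (fun r : ℝ => f r s) p.1) p.2)
          (Set.Ioi (0 : ℝ) ×ˢ Set.Ioi (0 : ℝ)) ∧
        (∫ p in Set.Ioi (0 : ℝ) ×ˢ Set.Ioi (0 : ℝ),
            ((p.2 : ℂ) ^ (-z)) * ((p.1 : ℂ) ^ (-((k : ℂ) * z))) * f p.1 p.2)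
          = ((-1 : ℂ) ^ (k + 1) / bk z) *
            ∫ p in Set.Ioi (0 : ℝ) ×ˢ Set.Ioi (0 : ℝ),
              ((p.2 : ℂ) ^ ((1 : ℂ) - z)) * ((p.1 : ℂ) ^ ((k : ℂ) * ((1 : ℂ) - z))) *
                deriv (fun s : ℝ => iteratedDeriv k (fun r : ℝ => f r s) p.1) p.2) := by
  constructor
  · -- part (i)
    intro y₁ y₂ hy₁ hy₂ z
    have hiter : (fun s : ℝ =>
        iteratedDeriv k
          (fun r : ℝ => ((s : ℂ) ^ ((1 : ℂ) - z)) * ((r : ℂ) ^ ((k : ℂ) * ((1 : ℂ) - z)))) y₁)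
        = fun s : ℝ => ((s : ℂ) ^ ((1 : ℂ) - z)) *
            ((∏ i ∈ Finset.range k, ((k : ℂ) * ((1 : ℂ) - z) - i)) *
              ((y₁ : ℂ) ^ ((k : ℂ) * ((1 : ℂ) - z) - k))) := by
      funext s
      rw [BSaux.iteratedDeriv_cpow ((k : ℂ) * ((1 : ℂ) - z)) ((s : ℂ) ^ ((1 : ℂ) - z)) k y₁ hy₁,
        mul_assoc]
    rw [hiter]
    rw [((BSaux.hasDerivAt_cpow' (ne_of_gt hy₂) ((1 : ℂ) - z)).mul_const _).deriv]
    rw [hbk, ← BSaux.prod_eq k z]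
    rw [show ((1 : ℂ) - z - 1) = -z by ring,
      show ((k : ℂ) * ((1 : ℂ) - z) - (k : ℕ)) = -((k : ℂ) * z) by ring]
    ring
  · -- part (ii)
    intro f hfC hfS z hz hbkz
    have hFsm : ContDiff ℝ (⊤ : ℕ∞) (fun p : ℝ × ℝ => f p.1 p.2) := hfC.of_le (by simp)
    have hbkz' : (1 - z) * ∏ j ∈ Finset.Icc 1 k, ((j : ℂ) - (k : ℂ) * z) ≠ 0 := by
      rw [← hbk z]; exact hbkz
    obtain ⟨I₁, I₂, heq⟩ := BSaux.functional_eq k hk z hz hbkz'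
      (fun p : ℝ × ℝ => f p.1 p.2) hFsm hfS
    have hT : ∀ p : ℝ × ℝ,
        deriv (fun s : ℝ => iteratedDeriv k (fun r : ℝ => f r s) p.1) p.2
          = BSaux.D2 (BSaux.D1^[k] (fun p : ℝ × ℝ => f p.1 p.2)) p := by
      intro p
      have h1 : (fun s : ℝ => iteratedDeriv k (fun r : ℝ => f r s) p.1)
          = fun s : ℝ => (BSaux.D1^[k] (fun p : ℝ × ℝ => f p.1 p.2)) (p.1, s) := by
        funext s
        exact BSaux.iteratedDeriv_slice hFsm k s p.1
      rw [h1]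
      have := (BSaux.hasDerivAt_slice2' (BSaux.contDiff_D1_iter hFsm k) p.1 p.2).deriv
      rw [this]
    have hT2 : (fun p : ℝ × ℝ =>
          ((p.2 : ℂ) ^ ((1 : ℂ) - z)) * ((p.1 : ℂ) ^ ((k : ℂ) * ((1 : ℂ) - z))) *
            deriv (fun s : ℝ => iteratedDeriv k (fun r : ℝ => f r s) p.1) p.2)
        = fun p : ℝ × ℝ =>
          ((p.2 : ℂ) ^ ((1 : ℂ) - z)) * ((p.1 : ℂ) ^ ((k : ℂ) * ((1 : ℂ) - z))) *
            (BSaux.D2 (BSaux.D1^[k] (fun p : ℝ × ℝ => f p.1 p.2))) p := by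
      funext p
      rw [hT p]
    refine ⟨I₁, ?_, ?_⟩
    · rw [hT2]; exact I₂
    · rw [hT2, hbk]; exact heq
end

section
/- Let X : ℝ^d → ℝ^d be a C^∞ vector field whose flow Φ : ℝ × ℝ^d → ℝ^d is globally defined (∂_t Φ(t,z) = X(Φ(t,z)), Φ(0,z) = z). Suppose z₀ is an isolated zero of X (i.e. X(z₀) = 0 and X(z) ≠ 0 for z ≠ z₀ in some neighborhood of z₀) and that the derivative of X vanishes at z₀, DX(z₀) = 0. Then for every T > 0 there exists a neighborhood U_T of z₀ such that Φ(t,z) ≠ z for every z ∈ U_T ∖ {z₀} and every t with 0 < |t| < T. -/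
open Metric Set Real

/-- Auxiliary lemma: if `Y` vanishes at `z₀`, is `L`-Lipschitz on the closed ball of
radius `r` around `z₀`, `g` is an integral curve of `Y` starting within `r/3` of `z₀`
with `Y (g 0) ≠ 0`, and `L * T ≤ 1/2`, then `g` does not return to its starting point
at any time `τ` with `0 < τ < T`. -/
lemma aux_no_return {E : Type*} [NormedAddCommGroup E] [NormedSpace ℝ E]
    (Y : E → E) (L : NNReal) (r T : ℝ) (z₀ : E)
    (hL : 0 < (L : ℝ)) (hLT : (L : ℝ) * T ≤ 1 / 2) (hr : 0 < r)
    (hLip : LipschitzOnWith L Y (Metric.closedBall z₀ r))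
    (hY0 : Y z₀ = 0)
    (g : ℝ → E) (hg : ∀ s, HasDerivAt g (Y (g s)) s)
    (hg0 : dist (g 0) z₀ < r / 3)
    (hv : Y (g 0) ≠ 0)
    (τ : ℝ) (hτ : 0 < τ) (hτT : τ < T) :
    g τ ≠ g 0 := by
  have hT : 0 < T := hτ.trans hτT
  have cont : Continuous g :=
    continuous_iff_continuousAt.2 fun s => (hg s).continuousAt
  -- exponential bound
  have hexp2 : ∀ s : ℝ, 0 ≤ s → s ≤ τ → Real.exp ((L : ℝ) * s) < 2 := by
    intro s hs0 hsτ
    have h1 : (L : ℝ) * s ≤ 1 / 2 := by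
      have : (L : ℝ) * s ≤ (L : ℝ) * T := by
        apply mul_le_mul_of_nonneg_left (by linarith) (le_of_lt hL)
      linarith
    have h2 : Real.exp ((L : ℝ) * s) ≤ Real.exp (1 / 2) := Real.exp_le_exp.2 h1
    have h3 : Real.exp (1 / 2) < 2 := by
      have he : Real.exp 1 < 2.7182818286 := Real.exp_one_lt_d9
      have hsq : Real.exp (1 / 2) * Real.exp (1 / 2) = Real.exp 1 := by
        rw [← Real.exp_add]; norm_num
      nlinarith [Real.exp_pos (1 / 2 : ℝ)]
    linarith
  -- Step 1: containment in the closed ball of radius r up to time τ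
  have key : ∀ s ∈ Icc (0 : ℝ) τ, g s ∈ Metric.closedBall z₀ r := by
    by_contra hcon
    push_neg at hcon
    obtain ⟨s₁, hs₁, hs₁r⟩ := hcon
    set Ebad : Set ℝ := {s | s ∈ Icc (0 : ℝ) τ ∧ r ≤ dist (g s) z₀} with hEbad
    have hclosed : IsClosed Ebad := by
      apply IsClosed.inter isClosed_Icc
      exact isClosed_le continuous_const (cont.dist continuous_const)
    have hne : Ebad.Nonempty := by
      refine ⟨s₁, hs₁, ?_⟩
      have : r < dist (g s₁) z₀ := by
        simpa [Metric.mem_closedBall] using hs₁r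
      linarith
    have hbdd : BddBelow Ebad := ⟨0, fun x hx => hx.1.1⟩
    set m := sInf Ebad with hm
    have hmE : m ∈ Ebad := hclosed.csInf_mem hne hbdd
    have hm0 : 0 < m := by
      rcases lt_or_eq_of_le hmE.1.1 with h | h
      · exact h
      · exfalso
        have h2 := hmE.2
        rw [← h] at h2
        have : r ≤ dist (g 0) z₀ := h2
        linarith
    -- all earlier times are strictly inside the ball
    have hinside : ∀ s ∈ Ico (0 : ℝ) m, dist (g s) z₀ < r := by
      intro s hs
      by_contra hge
      push_neg at hge
      have hsE : s ∈ Ebad := ⟨⟨hs.1, le_trans hs.2.le hmE.1.2⟩, hge⟩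
      exact absurd (csInf_le hbdd hsE) (not_le.2 hs.2)
    -- Gronwall on [0, m]
    have hgron := norm_le_gronwallBound_of_norm_deriv_right_le
      (f := fun s => g s - z₀) (f' := fun s => Y (g s))
      (δ := r / 3) (K := (L : ℝ)) (ε := 0) (a := 0) (b := m)
      ((cont.sub continuous_const).continuousOn)
      (fun s _ => ((hg s).sub_const z₀).hasDerivWithinAt)
      (by rw [← dist_eq_norm]; exact hg0.le)
      (by
        intro s hs
        have hgs : g s ∈ Metric.closedBall z₀ r :=
          Metric.mem_closedBall.2 (hinside s hs).le
        have hz : z₀ ∈ Metric.closedBall z₀ r := Metric.mem_closedBall_self hr.le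
        have := hLip.dist_le_mul (g s) hgs z₀ hz
        rw [hY0, dist_zero_right, dist_eq_norm] at this
        linarith)
      m ⟨hm0.le, le_refl m⟩
    rw [gronwallBound_ε0, sub_zero] at hgron
    have hexpm : Real.exp ((L : ℝ) * m) < 2 := hexp2 m hm0.le hmE.1.2
    have hd : dist (g m) z₀ = ‖g m - z₀‖ := dist_eq_norm _ _
    have hrm : r ≤ dist (g m) z₀ := hmE.2
    nlinarith [Real.exp_pos ((L : ℝ) * m)]
  -- Step 2: main estimate on h s = g s - g 0 - s • v
  set v := Y (g 0) with hvdef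
  have hvpos : 0 < ‖v‖ := norm_pos_iff.2 hv
  have hg0ball : g 0 ∈ Metric.closedBall z₀ r := by
    have : dist (g 0) z₀ ≤ r := by linarith
    exact Metric.mem_closedBall.2 this
  have hderivh : ∀ s : ℝ, HasDerivAt (fun u => g u - g 0 - u • v) (Y (g s) - v) s := by
    intro s
    have hsv : HasDerivAt (fun u : ℝ => u • v) v s := by
      simpa using (hasDerivAt_id s).smul_const v
    exact ((hg s).sub_const (g 0)).sub hsv
  have hgron2 := norm_le_gronwallBound_of_norm_deriv_right_le
    (f := fun u => g u - g 0 - u • v) (f' := fun s => Y (g s) - v)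
    (δ := 0) (K := (L : ℝ)) (ε := (L : ℝ) * (τ * ‖v‖)) (a := 0) (b := τ)
    (((cont.sub continuous_const).sub (continuous_id.smul continuous_const)).continuousOn)
    (fun s _ => (hderivh s).hasDerivWithinAt)
    (by simp)
    (by
      intro s hs
      have hgs : g s ∈ Metric.closedBall z₀ r := key s ⟨hs.1, hs.2.le⟩
      have hlips := hLip.dist_le_mul (g s) hgs (g 0) hg0ball
      rw [dist_eq_norm, dist_eq_norm] at hlips
      have hsplit : ‖g s - g 0‖ ≤ ‖g s - g 0 - s • v‖ + ‖s • v‖ := by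
        have heq2 : g s - g 0 = (g s - g 0 - s • v) + s • v := by abel
        calc ‖g s - g 0‖ = ‖(g s - g 0 - s • v) + s • v‖ := by rw [← heq2]
          _ ≤ ‖g s - g 0 - s • v‖ + ‖s • v‖ := norm_add_le _ _
      have hsv : ‖s • v‖ ≤ τ * ‖v‖ := by
        rw [norm_smul, Real.norm_eq_abs, abs_of_nonneg hs.1]
        exact mul_le_mul_of_nonneg_right hs.2.le (norm_nonneg v)
      calc ‖Y (g s) - v‖ ≤ (L : ℝ) * ‖g s - g 0‖ := hlips
        _ ≤ (L : ℝ) * (‖g s - g 0 - s • v‖ + τ * ‖v‖) := by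
            apply mul_le_mul_of_nonneg_left _ (le_of_lt hL)
            linarith
        _ = (L : ℝ) * ‖g s - g 0 - s • v‖ + (L : ℝ) * (τ * ‖v‖) := by ring)
    τ ⟨hτ.le, le_refl τ⟩
  rw [gronwallBound_of_K_ne_0 (ne_of_gt hL)] at hgron2
  simp only [sub_zero] at hgron2
  have hgron2' : ‖g τ - g 0 - τ • v‖ ≤ τ * ‖v‖ * (Real.exp ((L : ℝ) * τ) - 1) := by
    have hLne : (L : ℝ) ≠ 0 := ne_of_gt hL
    have : (L : ℝ) * (τ * ‖v‖) / (L : ℝ) = τ * ‖v‖ := by field_simp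
    calc ‖g τ - g 0 - τ • v‖
        ≤ 0 * Real.exp ((L : ℝ) * τ)
          + (L : ℝ) * (τ * ‖v‖) / (L : ℝ) * (Real.exp ((L : ℝ) * τ) - 1) := hgron2
      _ = τ * ‖v‖ * (Real.exp ((L : ℝ) * τ) - 1) := by rw [this]; ring
  intro heq
  have hnorm : ‖g τ - g 0 - τ • v‖ = τ * ‖v‖ := by
    rw [heq]
    simp only [sub_self, zero_sub, norm_neg, norm_smul, Real.norm_eq_abs,
      abs_of_nonneg hτ.le]
  rw [hnorm] at hgron2'
  have hexpτ : Real.exp ((L : ℝ) * τ) < 2 := hexp2 τ hτ.le (le_refl τ)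
  nlinarith [mul_pos hτ hvpos]

/- STATEMENT 7: Dynamical lemma ("Lemma dynamic"): near an isolated zero z₀ of a
smooth vector field X with DX(z₀) = 0, for every T > 0 there is a neighborhood
U_T of z₀ on which no point except z₀ is periodic with (nonzero) period < T. -/

theorem no_short_periodic_orbits_near_degenerate_equilibrium
    {d : ℕ}
    (X : EuclideanSpace ℝ (Fin d) → EuclideanSpace ℝ (Fin d))
    (hX : ContDiff ℝ (⊤ : ℕ∞) X)
    (Φ : ℝ → EuclideanSpace ℝ (Fin d) → EuclideanSpace ℝ (Fin d))
    (hflow : ∀ (t : ℝ) (z : EuclideanSpace ℝ (Fin d)),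
      HasDerivAt (fun s : ℝ => Φ s z) (X (Φ t z)) t)
    (hinit : ∀ z : EuclideanSpace ℝ (Fin d), Φ 0 z = z)
    (z₀ : EuclideanSpace ℝ (Fin d))
    (hz₀ : X z₀ = 0)
    (hiso : ∃ V ∈ nhds z₀, ∀ z ∈ V, z ≠ z₀ → X z ≠ 0)
    (hDX : fderiv ℝ X z₀ = 0) :
    ∀ T : ℝ, 0 < T → ∃ U ∈ nhds z₀, ∀ z ∈ U, z ≠ z₀ →
      ∀ t : ℝ, 0 < |t| → |t| < T → Φ t z ≠ z := by
  obtain ⟨V, hV, hVz⟩ := hiso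
  intro T hT
  -- choose Lipschitz constant
  set L : NNReal := Real.toNNReal (1 / (2 * T)) with hLdef
  have hLcoe : (L : ℝ) = 1 / (2 * T) := Real.coe_toNNReal _ (by positivity)
  have hL0 : 0 < (L : ℝ) := by rw [hLcoe]; positivity
  have hLT : (L : ℝ) * T ≤ 1 / 2 := by
    rw [hLcoe, div_mul_eq_mul_div, one_mul,
      div_le_div_iff₀ (by positivity) (by norm_num)]
    linarith
  -- the fderiv is continuous and vanishes at z₀
  have hXd : Differentiable ℝ X := hX.differentiable (by simp)
  have hfc : Continuous fun w => ‖fderiv ℝ X w‖ :=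
    (hX.continuous_fderiv (by simp)).norm
  have h0 : ‖fderiv ℝ X z₀‖ < (L : ℝ) := by rw [hDX, norm_zero]; exact hL0
  have h1 : {w | ‖fderiv ℝ X w‖ < (L : ℝ)} ∈ nhds z₀ :=
    hfc.continuousAt.preimage_mem_nhds (Iio_mem_nhds h0)
  obtain ⟨r, hr0, hrsub⟩ :
      ∃ r > 0, Metric.closedBall z₀ r ⊆ V ∩ {w | ‖fderiv ℝ X w‖ < (L : ℝ)} :=
    Metric.nhds_basis_closedBall.mem_iff.1 (Filter.inter_mem hV h1)
  -- Lipschitz bound on the closed ball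
  have hLip : LipschitzOnWith L X (Metric.closedBall z₀ r) := by
    apply Convex.lipschitzOnWith_of_nnnorm_fderiv_le (fun x _ => hXd x)
      (fun x hx => ?_) (convex_closedBall z₀ r)
    have := (hrsub hx).2
    rw [← NNReal.coe_le_coe, coe_nnnorm]
    exact le_of_lt this
  refine ⟨Metric.ball z₀ (r / 3), Metric.ball_mem_nhds _ (by positivity), ?_⟩
  intro z hz hzne t ht htT
  have hzd : dist z z₀ < r / 3 := Metric.mem_ball.1 hz
  have hzV : z ∈ V := (hrsub (Metric.mem_closedBall.2 (by linarith))).1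
  have hXz : X z ≠ 0 := hVz z hzV hzne
  rcases lt_trichotomy t 0 with htneg | htzero | htpos
  · -- negative time: reverse the flow
    have habs : |t| = -t := abs_of_neg htneg
    have hLip' : LipschitzOnWith L (fun w => -(X w)) (Metric.closedBall z₀ r) := by
      intro x hx y hy
      simpa [edist_neg_neg] using hLip hx hy
    have hg : ∀ s : ℝ, HasDerivAt (fun u : ℝ => Φ (-u) z) (-(X (Φ (-s) z))) s := by
      intro s
      have h1 : HasDerivAt (fun s : ℝ => Φ s z) (X (Φ (-s) z)) (-s) := hflow (-s) z
      have h2 : HasDerivAt (fun u : ℝ => -u) (-1 : ℝ) s := (hasDerivAt_id s).neg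
      have := h1.scomp_of_eq s h2 rfl
      simpa [Function.comp_def] using this
    have hmain := aux_no_return (fun w => -(X w)) L r T z₀ hL0 hLT hr0 hLip'
      (by simp [hz₀]) (fun u : ℝ => Φ (-u) z) hg
      (by simpa [hinit] using hzd)
      (by
        show -(X (Φ (-0) z)) ≠ 0
        rw [neg_zero, hinit]
        exact neg_ne_zero.2 hXz)
      (-t) (by linarith) (by rw [← habs]; exact htT)
    intro heq
    apply hmain
    show Φ (-(-t)) z = Φ (-0) z
    rw [neg_neg, neg_zero, hinit, heq]
  · exfalso; rw [htzero] at ht; simp at ht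
  · -- positive time
    have habs : |t| = t := abs_of_pos htpos
    have hmain := aux_no_return X L r T z₀ hL0 hLT hr0 hLip hz₀
      (fun s : ℝ => Φ s z) (fun s => hflow s z)
      (by simpa [hinit] using hzd)
      (by show X (Φ 0 z) ≠ 0; rw [hinit]; exact hXz)
      t htpos (by rw [← habs]; exact htT)
    intro heq
    apply hmain
    show Φ t z = Φ 0 z
    rw [heq, hinit]
end

section
/- Let k > 2 be an integer, X : ℝ^d → ℝ^d a C^∞ vector field with X(z₀) = 0 and with all iterated derivatives of order 1 ≤ j ≤ k−2 vanishing at z₀ (D^j X(z₀) = 0 for 1 ≤ j ≤ k−2). Let Φ : ℝ × ℝ^d → ℝ^d be a C^∞ map satisfying ∂_t Φ(t,z) = X(Φ(t,z)) and Φ(0,z) = z. Then for every t ∈ ℝ: (i) Φ(t,z₀) = z₀; (ii) the first derivative in z satisfies D_zΦ(t,·)(z₀) = Id; (iii) the iterated derivatives in z of order j vanish at z₀ for every 2 ≤ j ≤ k−2: D_z^j Φ(t,·)(z₀) = 0; and (iv) the derivative of order k−1 satisfies D_z^{k−1} Φ(t,·)(z₀) = t · D^{k−1} X(z₀) as symmetric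 (k−1)-linear maps from (ℝ^d)^{k−1} to ℝ^d. -/
open ContDiff Topology Set
set_option maxHeartbeats 1000000

section Aux

universe u
variable {E F G : Type u} [NormedAddCommGroup E] [NormedSpace ℝ E]
  [NormedAddCommGroup F] [NormedSpace ℝ F] [NormedAddCommGroup G] [NormedSpace ℝ G]

lemma one_le_inftyS : (1 : WithTop ℕ∞) ≤ ∞ := by exact_mod_cast le_top

lemma fderiv_comp_const_add'' (f : E → F) (c x : E) :
    fderiv ℝ (fun p => f (c + p)) x = fderiv ℝ f (c + x) := by
  by_cases hd : DifferentiableAt ℝ f (c + x)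
  · have h1 : HasFDerivAt (fun p : E => c + p) (ContinuousLinearMap.id ℝ E) x := by
      simpa using (hasFDerivAt_id x).const_add c
    have h2 := hd.hasFDerivAt.comp x h1
    simpa [Function.comp_def] using h2.fderiv
  · have hd2 : ¬ DifferentiableAt ℝ (fun p => f (c + p)) x := by
      intro h
      apply hd
      have h1 : DifferentiableAt ℝ (fun q : E => -c + q) (c + x) :=
        (differentiableAt_id.const_add _)
      have h2 : DifferentiableAt ℝ ((fun p => f (c + p)) ∘ (fun q : E => -c + q)) (c + x) :=
        DifferentiableAt.comp _ (by rw [neg_add_cancel_left]; exact h) h1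
      have h3 : ((fun p => f (c + p)) ∘ (fun q : E => -c + q)) = f := by
        funext q; simp [Function.comp, add_neg_cancel_left]
      rwa [h3] at h2
    rw [fderiv_zero_of_not_differentiableAt hd, fderiv_zero_of_not_differentiableAt hd2]

lemma iteratedFDeriv_comp_const_add' (f : E → F) (c : E) (n : ℕ) :
    ∀ x, iteratedFDeriv ℝ n (fun p => f (c + p)) x = iteratedFDeriv ℝ n f (c + x) := by
  induction n with
  | zero => intro x; ext m; simp
  | succ n IH =>
    intro x
    ext m
    rw [iteratedFDeriv_succ_apply_left, iteratedFDeriv_succ_apply_left]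
    have h1 : iteratedFDeriv ℝ n (fun p => f (c + p))
        = fun y => iteratedFDeriv ℝ n f (c + y) := funext IH
    rw [h1, fderiv_comp_const_add'' (iteratedFDeriv ℝ n f) c x]

lemma fderiv_iteratedFDeriv_apply' {E : Type u} [NormedAddCommGroup E] [NormedSpace ℝ E]
    (v : E) : ∀ (n : ℕ) {F : Type u} [NormedAddCommGroup F] [NormedSpace ℝ F] (g : E → F),
      ContDiff ℝ ∞ g → ∀ x, fderiv ℝ (iteratedFDeriv ℝ n g) x v
        = iteratedFDeriv ℝ n (fun q => fderiv ℝ g q v) x := by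
  intro n
  induction n with
  | zero =>
    intro F _ _ g hg x
    ext m
    rw [show iteratedFDeriv ℝ 0 g = (continuousMultilinearCurryFin0 ℝ E F).symm ∘ g from
      iteratedFDeriv_zero_eq_comp, LinearIsometryEquiv.comp_fderiv]
    simp
  | succ n IH =>
    intro F _ _ g hg x
    have hg1 : ContDiff ℝ ∞ (fderiv ℝ g) := hg.fderiv_right le_rfl
    have hHd : Differentiable ℝ (iteratedFDeriv ℝ n (fderiv ℝ g)) :=
      (hg1.iteratedFDeriv_right (m := 1) (by exact_mod_cast le_top)).differentiable (by simp)
    set e := (continuousMultilinearCurryRightEquiv' ℝ n E F).symm with he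
    set L := e.toLinearIsometry.toContinuousLinearMap with hL
    have hcoe : ⇑L = ⇑e := by
      rw [hL]
      simp only [LinearIsometry.coe_toContinuousLinearMap, LinearIsometryEquiv.coe_toLinearIsometry]
    ext m
    have hfe : iteratedFDeriv ℝ (n+1) g
        = ⇑L ∘ (iteratedFDeriv ℝ n (fderiv ℝ g)) := by
      rw [hcoe]
      exact funext fun y => iteratedFDeriv_succ_eq_comp_right
    rw [hfe]
    have h5 : HasFDerivAt (⇑L ∘ (iteratedFDeriv ℝ n (fderiv ℝ g)))
        (L.comp (fderiv ℝ (iteratedFDeriv ℝ n (fderiv ℝ g)) x)) x :=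
      L.hasFDerivAt.comp x (hHd x).hasFDerivAt
    rw [h5.fderiv]
    have hfn : fderiv ℝ (fun q => fderiv ℝ g q v) = fun q => fderiv ℝ (fderiv ℝ g) q v := by
      funext q
      have hdg : HasFDerivAt (fderiv ℝ g) (fderiv ℝ (fderiv ℝ g) q) q :=
        (hg1.differentiable (by simp) q).hasFDerivAt
      have h2 : HasFDerivAt (fun y => fderiv ℝ g y v)
          ((fderiv ℝ (fderiv ℝ g) q).flip v) q := by
        simpa using hdg.clm_apply (hasFDerivAt_const v q)
      rw [h2.fderiv]
      ext u
      exact second_derivative_symmetric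
        (fun y => (hg.differentiable (by simp) y).hasFDerivAt) hdg u v
    rw [iteratedFDeriv_succ_apply_right, hfn, ← IH (fderiv ℝ g) hg1 x,
      ContinuousLinearMap.comp_apply, congrFun hcoe]
    rfl

lemma iteratedFDeriv_slice (H : ℝ × E → F) (hH : ContDiff ℝ ∞ H) (j : ℕ) (t : ℝ) (z : E) :
    iteratedFDeriv ℝ j (fun w => H (t, w)) z
      = (iteratedFDeriv ℝ j H (t, z)).compContinuousLinearMap
          (fun _ => ContinuousLinearMap.inr ℝ ℝ E) := by
  have h1 : (fun w => H (t, w))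
      = (fun p => H ((t, (0:E)) + p)) ∘ (ContinuousLinearMap.inr ℝ ℝ E) := by
    funext w; simp
  rw [h1]
  have hH' : ContDiff ℝ ∞ (fun p => H ((t, (0:E)) + p)) :=
    hH.comp (contDiff_const.add contDiff_id)
  rw [ContinuousLinearMap.iteratedFDeriv_comp_right _ hH' _ (by exact_mod_cast le_top)]
  rw [iteratedFDeriv_comp_const_add' H ((t, (0:E))) j]
  congr 2
  simp

lemma hasDerivAt_iteratedFDeriv_slice (H : ℝ × E → F) (hH : ContDiff ℝ ∞ H) (j : ℕ)
    (z₀ : E) (t : ℝ) :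
    HasDerivAt (fun s => iteratedFDeriv ℝ j (fun w => H (s, w)) z₀)
      (iteratedFDeriv ℝ j (fun w => fderiv ℝ H (t, w) (1, 0)) z₀) t := by
  set Ψ := ContinuousMultilinearMap.compContinuousLinearMapL
    (F := F) (fun _ : Fin j => ContinuousLinearMap.inr ℝ ℝ E) with hΨ
  have hfun : (fun s => iteratedFDeriv ℝ j (fun w => H (s, w)) z₀)
      = fun s => Ψ (iteratedFDeriv ℝ j H (s, z₀)) := by
    funext s; rw [iteratedFDeriv_slice H hH j s z₀]; rfl
  rw [hfun]
  have hG : Differentiable ℝ (iteratedFDeriv ℝ j H) :=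
    (hH.iteratedFDeriv_right (m := 1) (by exact_mod_cast le_top)).differentiable (by simp)
  have hι : HasDerivAt (fun s : ℝ => (s, z₀)) ((1:ℝ), (0:E)) t :=
    (hasDerivAt_id t).prodMk (hasDerivAt_const t z₀)
  have h1 : HasDerivAt (fun s => iteratedFDeriv ℝ j H (s, z₀))
      (fderiv ℝ (iteratedFDeriv ℝ j H) (t, z₀) (1, 0)) t :=
    (hG (t, z₀)).hasFDerivAt.comp_hasDerivAt t hι
  have h2 := (Ψ.hasFDerivAt).comp_hasDerivAt t h1
  refine h2.congr_deriv ?_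
  rw [fderiv_iteratedFDeriv_apply' ((1:ℝ), (0:E)) j H hH (t, z₀)]
  have hH'' : ContDiff ℝ ∞ (fun q : ℝ × E => fderiv ℝ H q ((1:ℝ), (0:E))) :=
    (hH.fderiv_right le_rfl).clm_apply contDiff_const
  rw [iteratedFDeriv_slice _ hH'' j t z₀]
  rfl

lemma iteratedFDeriv_comp_eq_sum (g : F → G) (f : E → F)
    (hg : ContDiff ℝ ∞ g) (hf : ContDiff ℝ ∞ f) (x : E) (n : ℕ) :
    iteratedFDeriv ℝ n (g ∘ f) x = ∑ c : OrderedFinpartition n,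
      c.compAlongOrderedFinpartition (iteratedFDeriv ℝ c.length g (f x))
        (fun m => iteratedFDeriv ℝ (c.partSize m) f x) := by
  have hg' : HasFTaylorSeriesUpToOn ∞ g (ftaylorSeries ℝ g) univ := by
    rw [← ftaylorSeriesWithin_univ]
    exact hg.contDiffOn.ftaylorSeriesWithin uniqueDiffOn_univ
  have hf' : HasFTaylorSeriesUpToOn ∞ f (ftaylorSeries ℝ f) univ := by
    rw [← ftaylorSeriesWithin_univ]
    exact hf.contDiffOn.ftaylorSeriesWithin uniqueDiffOn_univ
  have h := (hg'.comp hf' (mapsTo_univ f univ)).eq_iteratedFDerivWithin_of_uniqueDiffOn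
    (m := n) (by exact_mod_cast le_top) uniqueDiffOn_univ (mem_univ x)
  rw [iteratedFDerivWithin_univ] at h
  rw [← h]
  rfl

lemma OrderedFinpartition.eq_atomic_of_length_eq {n : ℕ} (c : OrderedFinpartition n)
    (h : c.length = n) : c = OrderedFinpartition.atomic n := by
  have hsum : ∑ m : Fin c.length, c.partSize m = n := by
    simpa using c.sum_sigma_eq_sum (fun _ => (1:ℕ))
  have hps : ∀ m, c.partSize m = 1 := by
    by_contra hcon
    push_neg at hcon
    obtain ⟨m, hm⟩ := hcon
    have hlt : ∑ _m : Fin c.length, 1 < ∑ m, c.partSize m :=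
      Finset.sum_lt_sum (fun i _ => c.partSize_pos i)
        ⟨m, Finset.mem_univ m, by have := c.partSize_pos m; omega⟩
    rw [hsum] at hlt
    simp [h] at hlt
  obtain ⟨len, ps, pos, emb, embmono, partsmono, disj, cover⟩ := c
  simp only at h hps hsum
  subst h
  have hps' : ps = fun _ => 1 := funext hps
  subst hps'
  have hid : (fun m : Fin len => emb m ⟨0, Nat.zero_lt_one⟩) = id := by
    apply (partsmono.range_inj strictMono_id).mp
    rw [Set.range_id, Set.range_eq_univ]
    exact Finite.surjective_of_injective partsmono.injective
  have hemb : emb = fun (m : Fin len) (_ : Fin 1) => m := by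
    funext m r
    have hr : r = ⟨0, Nat.zero_lt_one⟩ := Subsingleton.elim r _
    rw [hr]
    exact congrFun hid m
  subst hemb
  rfl

lemma iteratedFDeriv_id_of_two_le {n : ℕ} (hn : 2 ≤ n) (x : E) :
    iteratedFDeriv ℝ n (fun z : E => z) x = 0 := by
  obtain ⟨m, rfl⟩ : ∃ m, n = m + 1 + 1 := ⟨n - 2, by omega⟩
  ext v
  rw [iteratedFDeriv_succ_apply_right]
  have h1 : (fun y : E => fderiv ℝ (fun z : E => z) y)
      = fun _ => ContinuousLinearMap.id ℝ E := by
    funext y; exact fderiv_id'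
  rw [h1, iteratedFDeriv_const_of_ne (by omega)]
  simp

lemma const_of_hasDerivAt_zero {M : Type*} [NormedAddCommGroup M] [NormedSpace ℝ M]
    {A : ℝ → M} (h : ∀ s, HasDerivAt A 0 s) (s : ℝ) : A s = A 0 := by
  apply is_const_of_fderiv_eq_zero (𝕜 := ℝ) (fun r => (h r).differentiableAt) (fun r => ?_) s 0
  rw [(h r).hasFDerivAt.fderiv]
  ext u
  simp

end Aux

section Main

variable {E : Type} [NormedAddCommGroup E] [NormedSpace ℝ E]

theorem flow_aux (k : ℕ) (hk : 2 < k) (X : E → E) (hX : ContDiff ℝ ∞ X) (z₀ : E)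
    (hz₀ : X z₀ = 0)
    (hjets : ∀ j : ℕ, 1 ≤ j → j ≤ k - 2 → iteratedFDeriv ℝ j X z₀ = 0)
    (Φ : ℝ → E → E)
    (hΦ : ContDiff ℝ ∞ (fun p : ℝ × E => Φ p.1 p.2))
    (hflow : ∀ (t : ℝ) (z : E), HasDerivAt (fun s : ℝ => Φ s z) (X (Φ t z)) t)
    (hinit : ∀ z : E, Φ 0 z = z) (t : ℝ) :
    Φ t z₀ = z₀ ∧
      fderiv ℝ (Φ t) z₀ = ContinuousLinearMap.id ℝ E ∧
      (∀ j : ℕ, 2 ≤ j → j ≤ k - 2 → iteratedFDeriv ℝ j (Φ t) z₀ = 0) ∧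
      iteratedFDeriv ℝ (k - 1) (Φ t) z₀ = t • iteratedFDeriv ℝ (k - 1) X z₀ := by
  have hF : ContDiff ℝ ∞ (fun p : ℝ × E => Φ p.1 p.2) := hΦ
  have hΦt : ∀ s, ContDiff ℝ ∞ (Φ s) := fun s => hF.comp (contDiff_const.prodMk contDiff_id)
  -- Part (i): the equilibrium is fixed.
  have hfix : ∀ s, Φ s z₀ = z₀ := by
    have hcont : Continuous fun s : ℝ => Φ s z₀ :=
      hΦ.continuous.comp (continuous_id.prodMk continuous_const)
    have hclosed : IsClosed {s : ℝ | Φ s z₀ = z₀} := isClosed_eq hcont continuous_const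
    have hopen : IsOpen {s : ℝ | Φ s z₀ = z₀} := by
      rw [isOpen_iff_mem_nhds]
      intro t₀ ht₀
      have hX1 : ContDiffAt ℝ 1 X z₀ := (hX.of_le one_le_inftyS).contDiffAt
      obtain ⟨K, U, hU, hlip⟩ := hX1.exists_lipschitzOnWith
      have hUmem : ∀ᶠ s in 𝓝 t₀, Φ s z₀ ∈ U := by
        have h1 : ContinuousAt (fun s : ℝ => Φ s z₀) t₀ := hcont.continuousAt
        have h2 : U ∈ 𝓝 (Φ t₀ z₀) := by
          rw [show Φ t₀ z₀ = z₀ from ht₀]; exact hU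
        exact h1.eventually_mem h2
      have heq := ODE_solution_unique_of_eventually (v := fun _ : ℝ => X)
        (s := fun _ : ℝ => U) (K := K) (Filter.Eventually.of_forall fun _ => hlip)
        (f := fun s : ℝ => Φ s z₀) (g := fun _ : ℝ => z₀) (t₀ := t₀)
        (by filter_upwards [hUmem] with s hs; exact ⟨hflow s z₀, hs⟩)
        (Filter.Eventually.of_forall fun s =>
          ⟨by simpa [hz₀] using hasDerivAt_const s z₀, mem_of_mem_nhds hU⟩)
        (by simpa using ht₀)
      exact heq
    have hclopen := isClopen_iff.mp ⟨hclosed, hopen⟩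
    have h0 : (0:ℝ) ∈ {s : ℝ | Φ s z₀ = z₀} := hinit z₀
    rcases hclopen with h | h
    · rw [h] at h0; exact absurd h0 (notMem_empty _)
    · intro s; have hs : s ∈ {s : ℝ | Φ s z₀ = z₀} := h ▸ mem_univ s; exact hs
  -- Time derivative of the flow in terms of the vector field.
  have hXF : ∀ (s : ℝ) (w : E),
      fderiv ℝ (fun p : ℝ × E => Φ p.1 p.2) (s, w) (1, 0) = X (Φ s w) := by
    intro s w
    have h1 : HasDerivAt (fun r : ℝ => (r, w)) ((1:ℝ), (0:E)) s :=
      (hasDerivAt_id s).prodMk (hasDerivAt_const s w)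
    have h2 : HasDerivAt (fun r : ℝ => Φ r w)
        (fderiv ℝ (fun p : ℝ × E => Φ p.1 p.2) (s, w) (1, 0)) s :=
      ((hF.differentiable (by simp) (s, w)).hasFDerivAt).comp_hasDerivAt (l := fun p : ℝ × E => Φ p.1 p.2) s h1
    exact h2.unique (hflow s w)
  -- Derivative in `t` of the iterated derivatives of the flow.
  have hDer : ∀ (j : ℕ) (s : ℝ), HasDerivAt (fun r => iteratedFDeriv ℝ j (Φ r) z₀)
      (iteratedFDeriv ℝ j (X ∘ Φ s) z₀) s := by
    intro j s
    have h := hasDerivAt_iteratedFDeriv_slice (fun p : ℝ × E => Φ p.1 p.2) hF j z₀ s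
    have hval : (fun w => fderiv ℝ (fun p : ℝ × E => Φ p.1 p.2) (s, w) (1, 0)) = X ∘ Φ s :=
      funext fun w => hXF s w
    rw [hval] at h
    exact h
  have hΦ0 : Φ 0 = fun z : E => z := funext hinit
  -- Vanishing of the derivatives of order `1 ≤ j ≤ k-2` of `X ∘ Φ s` at `z₀`.
  have hcompzero : ∀ (j : ℕ), 1 ≤ j → j ≤ k - 2 → ∀ s,
      iteratedFDeriv ℝ j (X ∘ Φ s) z₀ = 0 := by
    intro j h1 h2 s
    rw [iteratedFDeriv_comp_eq_sum X (Φ s) hX (hΦt s) z₀ j]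
    apply Finset.sum_eq_zero
    intro c _
    have hlen1 : 1 ≤ c.length := c.length_pos (by omega)
    have hlen2 : c.length ≤ k - 2 := le_trans c.length_le h2
    rw [hfix s, hjets c.length hlen1 hlen2]
    ext v
    simp
  have hconst : ∀ (j : ℕ), (∀ s, iteratedFDeriv ℝ j (X ∘ Φ s) z₀ = 0) →
      ∀ s, iteratedFDeriv ℝ j (Φ s) z₀ = iteratedFDeriv ℝ j (Φ 0) z₀ := by
    intro j h0 s
    refine const_of_hasDerivAt_zero (A := fun r => iteratedFDeriv ℝ j (Φ r) z₀) (fun r => ?_) s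
    have h := hDer j r
    rwa [h0 r] at h
  -- Part (ii).
  have h1k : 1 ≤ k - 2 := by omega
  have hconst1 := hconst 1 (hcompzero 1 le_rfl h1k)
  have hid : ∀ s, fderiv ℝ (Φ s) z₀ = ContinuousLinearMap.id ℝ E := by
    intro s
    refine ContinuousLinearMap.ext fun u => ?_
    have h3 := congrFun (congrArg DFunLike.coe (hconst1 s)) (fun _ : Fin 1 => u)
    rw [iteratedFDeriv_one_apply, iteratedFDeriv_one_apply, hΦ0] at h3
    simpa using h3
  -- Part (iii).
  have hzero : ∀ j, 2 ≤ j → j ≤ k - 2 → iteratedFDeriv ℝ j (Φ t) z₀ = 0 := by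
    intro j h2 hk2
    rw [hconst j (hcompzero j (by omega) hk2) t, hΦ0, iteratedFDeriv_id_of_two_le h2]
  -- Part (iv).
  have hatomic : ∀ s, iteratedFDeriv ℝ (k-1) (X ∘ Φ s) z₀
      = iteratedFDeriv ℝ (k-1) X z₀ := by
    intro s
    rw [iteratedFDeriv_comp_eq_sum X (Φ s) hX (hΦt s) z₀ (k-1)]
    rw [Finset.sum_eq_single (OrderedFinpartition.atomic (k-1))]
    · rw [hfix s]
      ext v
      rw [OrderedFinpartition.compAlongOrderFinpartition_apply]
      congr 1
      funext m
      rw [OrderedFinpartition.applyOrderedFinpartition_apply]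
      show iteratedFDeriv ℝ 1 (Φ s) z₀ (v ∘ (OrderedFinpartition.atomic (k-1)).emb m) = v m
      rw [iteratedFDeriv_one_apply, hid s]
      simp [OrderedFinpartition.atomic]
      rfl
    · intro c _ hc
      have hlen : c.length < k - 1 :=
        lt_of_le_of_ne c.length_le (fun h => hc (c.eq_atomic_of_length_eq h))
      have hlen1 : 1 ≤ c.length := c.length_pos (by omega)
      rw [hfix s, hjets c.length hlen1 (by omega)]
      ext v
      simp
    · intro h; exact absurd (Finset.mem_univ _) h
  have hDk : ∀ s, HasDerivAt (fun r => iteratedFDeriv ℝ (k-1) (Φ r) z₀)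
      (iteratedFDeriv ℝ (k-1) X z₀) s := by
    intro s
    have h := hDer (k-1) s
    rwa [hatomic s] at h
  have hW : ∀ s, HasDerivAt
      (fun r => iteratedFDeriv ℝ (k-1) (Φ r) z₀ - r • iteratedFDeriv ℝ (k-1) X z₀) 0 s := by
    intro s
    have h := (hDk s).sub ((hasDerivAt_id s).smul_const (iteratedFDeriv ℝ (k-1) X z₀))
    simpa [Pi.sub_def] using h
  have hlast : iteratedFDeriv ℝ (k-1) (Φ t) z₀ = t • iteratedFDeriv ℝ (k-1) X z₀ := by
    have h := const_of_hasDerivAt_zero (A := fun r => iteratedFDeriv ℝ (k-1) (Φ r) z₀ - r • iteratedFDeriv ℝ (k-1) X z₀) hW t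
    rw [hΦ0, iteratedFDeriv_id_of_two_le (by omega), zero_smul, sub_zero] at h
    rw [sub_eq_zero] at h
    exact h
  exact ⟨hfix t, hid t, hzero, hlast⟩

end Main

/- STATEMENT 8: Derivatives of the flow at an equilibrium whose (k−2)-jet is flat:
Φ_t(z₀) = z₀, D_zΦ_t(z₀) = Id, D_z^jΦ_t(z₀) = 0 for 2 ≤ j ≤ k−2, and
D_z^{k−1}Φ_t(z₀) = t · D^{k−1}X(z₀) as symmetric (k−1)-linear maps. -/

theorem flow_derivatives_at_flat_equilibrium
    {d : ℕ} (k : ℕ) (hk : 2 < k)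
    (X : EuclideanSpace ℝ (Fin d) → EuclideanSpace ℝ (Fin d))
    (hX : ContDiff ℝ (⊤ : ℕ∞) X)
    (z₀ : EuclideanSpace ℝ (Fin d))
    (hz₀ : X z₀ = 0)
    (hjets : ∀ j : ℕ, 1 ≤ j → j ≤ k - 2 → iteratedFDeriv ℝ j X z₀ = 0)
    (Φ : ℝ → EuclideanSpace ℝ (Fin d) → EuclideanSpace ℝ (Fin d))
    (hΦ : ContDiff ℝ (⊤ : ℕ∞) (fun p : ℝ × EuclideanSpace ℝ (Fin d) => Φ p.1 p.2))
    (hflow : ∀ (t : ℝ) (z : EuclideanSpace ℝ (Fin d)),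
      HasDerivAt (fun s : ℝ => Φ s z) (X (Φ t z)) t)
    (hinit : ∀ z : EuclideanSpace ℝ (Fin d), Φ 0 z = z) :
    ∀ t : ℝ,
      Φ t z₀ = z₀ ∧
      fderiv ℝ (Φ t) z₀ = ContinuousLinearMap.id ℝ (EuclideanSpace ℝ (Fin d)) ∧
      (∀ j : ℕ, 2 ≤ j → j ≤ k - 2 → iteratedFDeriv ℝ j (Φ t) z₀ = 0) ∧
      iteratedFDeriv ℝ (k - 1) (Φ t) z₀ = t • iteratedFDeriv ℝ (k - 1) X z₀ :=
  fun t => flow_aux k hk X (hX.of_le (by simp)) z₀ hz₀ hjets Φ (hΦ.of_le (by simp)) hflow hinit t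
end

section
/- Let k ≥ 1 and m ≥ 1 be integers and let F : ℝ × ℝ × ℝ^m → ℝ be smooth on a neighborhood of a point (t₀, 0, θ₀), with F(t,0,θ) = f(θ) independent of t. If f(θ₀) > 0, then the map η(t,r,θ) = ( t, r·F(t,r,θ)^{1/k}, θ ) is a smooth local diffeomorphism at (t₀, 0, θ₀); its Jacobian determinant at points (t,0,θ) near (t₀,0,θ₀) equals f(θ)^{1/k} ≠ 0, and on its domain of definition one has the phase identity −t r^k F(t,r,θ) = −η₀ η₁^k, where η₀, η₁ denote the first two components of η. If instead f(θ₀) < 0, the map (t, r·(−F(t,r,θ))^{1/k}, θ) is a smooth local diffeomorphism at (t₀,0,θ₀) and −t r^k F(t,r,θ) = +η₀ η₁^k. -/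
open Set ContinuousLinearMap

private lemma my_det_prodMap {K M N : Type*} [Field K] [AddCommGroup M] [Module K M]
    [AddCommGroup N] [Module K N] [FiniteDimensional K M] [FiniteDimensional K N]
    (f : M →ₗ[K] M) (g : N →ₗ[K] N) :
    LinearMap.det (f.prodMap g) = LinearMap.det f * LinearMap.det g := by
  classical
  let b₁ := Module.finBasis K M
  let b₂ := Module.finBasis K N
  rw [← LinearMap.det_toMatrix (b₁.prod b₂), LinearMap.toMatrix_prodMap,
    Matrix.det_fromBlocks_zero₁₂, LinearMap.det_toMatrix, LinearMap.det_toMatrix]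

private lemma normal_form_aux
    (k m : ℕ) (hk : 1 ≤ k)
    (G : ℝ × ℝ × (Fin m → ℝ) → ℝ)
    (g : (Fin m → ℝ) → ℝ)
    (t₀ : ℝ) (θ₀ : Fin m → ℝ)
    (V : Set (ℝ × ℝ × (Fin m → ℝ)))
    (hVopen : IsOpen V) (hV : (t₀, (0 : ℝ), θ₀) ∈ V)
    (hG : ContDiffOn ℝ (⊤ : ℕ∞) G V)
    (hg : ∀ (t : ℝ) (θ : Fin m → ℝ), (t, (0 : ℝ), θ) ∈ V → G (t, 0, θ) = g θ)
    (hpos : 0 < g θ₀) :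
    ∃ η : ℝ × ℝ × (Fin m → ℝ) → ℝ × ℝ × (Fin m → ℝ),
      (∀ p : ℝ × ℝ × (Fin m → ℝ),
        η p = (p.1, p.2.1 * (G p) ^ ((1 : ℝ) / k), p.2.2)) ∧
      ∃ U : Set (ℝ × ℝ × (Fin m → ℝ)),
        IsOpen U ∧ (t₀, (0 : ℝ), θ₀) ∈ U ∧ U ⊆ V ∧
        ContDiffOn ℝ (⊤ : ℕ∞) η U ∧ Set.InjOn η U ∧ IsOpen (η '' U) ∧
        (∃ ηinv : ℝ × ℝ × (Fin m → ℝ) → ℝ × ℝ × (Fin m → ℝ),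
          ContDiffOn ℝ (⊤ : ℕ∞) ηinv (η '' U) ∧ ∀ p ∈ U, ηinv (η p) = p) ∧
        (∀ p ∈ U, p.2.1 = 0 →
          LinearMap.det (fderiv ℝ η p).toLinearMap = (g p.2.2) ^ ((1 : ℝ) / k) ∧
          (g p.2.2) ^ ((1 : ℝ) / k) ≠ 0) ∧
        (∀ p ∈ U, -(p.1) * p.2.1 ^ k * G p = -((η p).1 * (η p).2.1 ^ k)) := by
  classical
  have hk0 : (k : ℝ) ≠ 0 := Nat.cast_ne_zero.mpr (by omega)
  set a : ℝ × ℝ × (Fin m → ℝ) := (t₀, 0, θ₀) with ha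
  set η : ℝ × ℝ × (Fin m → ℝ) → ℝ × ℝ × (Fin m → ℝ) :=
    fun p => (p.1, p.2.1 * (G p) ^ ((1 : ℝ) / k), p.2.2) with hηdef
  refine ⟨η, fun p => rfl, ?_⟩
  -- the open set where G > 0
  set W : Set (ℝ × ℝ × (Fin m → ℝ)) := V ∩ G ⁻¹' Ioi 0 with hWdef
  have hWopen : IsOpen W := hG.continuousOn.isOpen_inter_preimage hVopen isOpen_Ioi
  have haW : a ∈ W := ⟨hV, by simp only [mem_preimage, mem_Ioi]; rw [hg t₀ θ₀ hV]; exact hpos⟩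
  have hGat : ∀ p ∈ W, ContDiffAt ℝ (⊤ : ℕ∞) G p := fun p hp => hG.contDiffAt (hVopen.mem_nhds hp.1)
  have hGpos : ∀ p ∈ W, 0 < G p := fun p hp => hp.2
  -- smoothness of η on W
  have hηat : ∀ p ∈ W, ContDiffAt ℝ (⊤ : ℕ∞) η p := by
    intro p hp
    refine ContDiffAt.prodMk contDiffAt_fst (ContDiffAt.prodMk ?_ (contDiffAt_snd.comp p contDiffAt_snd))
    exact (contDiffAt_fst.comp p contDiffAt_snd).mul
      ((Real.contDiffAt_rpow_const_of_ne (ne_of_gt (hGpos p hp))).comp p (hGat p hp))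
  have hηW : ContDiffOn ℝ (⊤ : ℕ∞) η W := fun p hp => (hηat p hp).contDiffWithinAt
  -- the model derivative
  set L : ℝ → (ℝ × ℝ × (Fin m → ℝ)) →L[ℝ] ℝ × ℝ × (Fin m → ℝ) := fun c =>
    (fst ℝ ℝ (ℝ × (Fin m → ℝ))).prod
      ((c • ((fst ℝ ℝ (Fin m → ℝ)).comp (snd ℝ ℝ (ℝ × (Fin m → ℝ))))).prod
        ((snd ℝ ℝ (Fin m → ℝ)).comp (snd ℝ ℝ (ℝ × (Fin m → ℝ))))) with hLdef
  have hderiv : ∀ p ∈ W, p.2.1 = 0 → HasFDerivAt η (L ((G p) ^ ((1 : ℝ) / k))) p := by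
    intro p hp hr
    have hGd : HasFDerivAt (fun q => (G q) ^ ((1 : ℝ) / k))
        (fderiv ℝ (fun q => (G q) ^ ((1 : ℝ) / k)) p) p :=
      ((((Real.contDiffAt_rpow_const_of_ne (ne_of_gt (hGpos p hp))).comp p
        (hGat p hp))).differentiableAt (by simp)).hasFDerivAt
    have h1 : HasFDerivAt (fun q : ℝ × ℝ × (Fin m → ℝ) => q.2.1)
        ((fst ℝ ℝ (Fin m → ℝ)).comp (snd ℝ ℝ (ℝ × (Fin m → ℝ)))) p :=
      hasFDerivAt_fst.comp p hasFDerivAt_snd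
    have h2 := h1.mul hGd
    rw [hr, zero_smul, zero_add] at h2
    exact HasFDerivAt.prodMk hasFDerivAt_fst (h2.prodMk (hasFDerivAt_snd.comp p hasFDerivAt_snd))
  -- L c is a unit for c ≠ 0
  have hLmul : ∀ c c' : ℝ, L c * L c' = L (c * c') := by
    intro c c'
    refine ContinuousLinearMap.ext fun x => ?_
    simp only [ContinuousLinearMap.mul_apply]
    show ((L c' x).1, c * (L c' x).2.1, (L c' x).2.2) = (x.1, c * c' * x.2.1, x.2.2)
    show (x.1, c * (c' * x.2.1), x.2.2) = (x.1, c * c' * x.2.1, x.2.2)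
    rw [mul_assoc]
  have hLone : L 1 = 1 := by
    refine ContinuousLinearMap.ext fun x => ?_
    show (x.1, (1 : ℝ) * x.2.1, x.2.2) = x
    rw [one_mul]
  have hunit : ∀ c : ℝ, c ≠ 0 → IsUnit (L c) := by
    intro c hc
    exact ⟨⟨L c, L c⁻¹,
      by rw [hLmul, mul_inv_cancel₀ hc, hLone],
      by rw [hLmul, inv_mul_cancel₀ hc, hLone]⟩, rfl⟩
  -- units give continuous linear equivs
  have hequiv : ∀ A : (ℝ × ℝ × (Fin m → ℝ)) →L[ℝ] ℝ × ℝ × (Fin m → ℝ), IsUnit A →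
      ∃ e : (ℝ × ℝ × (Fin m → ℝ)) ≃L[ℝ] ℝ × ℝ × (Fin m → ℝ),
        (e : (ℝ × ℝ × (Fin m → ℝ)) →L[ℝ] ℝ × ℝ × (Fin m → ℝ)) = A := by
    rintro A ⟨u, rfl⟩
    refine ⟨ContinuousLinearEquiv.equivOfInverse u.val ↑u⁻¹ (fun x => ?_) (fun x => ?_), rfl⟩
    · rw [← ContinuousLinearMap.mul_apply, u.inv_mul, ContinuousLinearMap.one_apply]
    · rw [← ContinuousLinearMap.mul_apply, u.mul_inv, ContinuousLinearMap.one_apply]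
  -- derivative of η at a
  have hda : HasFDerivAt η (L ((G a) ^ ((1 : ℝ) / k))) a := hderiv a haW rfl
  have hcane : (G a) ^ ((1 : ℝ) / k) ≠ 0 := (Real.rpow_pos_of_pos (hGpos a haW) _).ne'
  obtain ⟨e₀, he₀⟩ := hequiv _ (hunit _ hcane)
  have hda' : HasFDerivAt η
      (e₀ : (ℝ × ℝ × (Fin m → ℝ)) →L[ℝ] ℝ × ℝ × (Fin m → ℝ)) a := by rw [he₀]; exact hda
  have hηa : ContDiffAt ℝ (⊤ : ℕ∞) η a := hηat a haW
  -- the inverse function theorem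
  set Φ := hηa.toOpenPartialHomeomorph η hda' (by simp) with hΦdef
  have hcoe : ⇑Φ = η := hηa.toOpenPartialHomeomorph_coe hda' (by simp)
  have haΦ : a ∈ Φ.source := hηa.mem_toOpenPartialHomeomorph_source hda' (by simp)
  -- the set where the derivative is a unit
  have hfdcont : ContinuousOn (fderiv ℝ η) W := hηW.continuousOn_fderiv_of_isOpen hWopen (by simp)
  set U : Set (ℝ × ℝ × (Fin m → ℝ)) :=
    (W ∩ fderiv ℝ η ⁻¹' {A | IsUnit A}) ∩ Φ.source with hUdef
  have hUopen : IsOpen U :=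
    (hfdcont.isOpen_inter_preimage hWopen Units.isOpen).inter Φ.open_source
  have haU : a ∈ U := by
    refine ⟨⟨haW, ?_⟩, haΦ⟩
    simp only [mem_preimage, mem_setOf_eq, hda.fderiv]
    exact hunit _ hcane
  have hUW : U ⊆ W := fun p hp => hp.1.1
  have hUV : U ⊆ V := fun p hp => (hUW hp).1
  have hUΦ : U ⊆ Φ.source := fun p hp => hp.2
  -- left inverse
  have hleft : ∀ p ∈ U, Φ.symm (η p) = p := by
    intro p hp
    rw [← congrFun hcoe p]
    exact Φ.left_inv (hUΦ hp)
  refine ⟨U, hUopen, haU, hUV, hηW.mono hUW, ?_, ?_, ⟨Φ.symm, ?_, hleft⟩, ?_, ?_⟩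
  · -- injectivity
    intro p hp q hq h
    rw [← hleft p hp, ← hleft q hq, h]
  · -- open image
    have himg : η '' U = Φ '' U := image_congr fun x hx => (congrFun hcoe x).symm
    rw [himg]
    exact Φ.isOpen_image_of_subset_source hUopen hUΦ
  · -- smoothness of the inverse
    rintro y ⟨p, hp, rfl⟩
    have hpη : η p ∈ Φ.target := by
      rw [← congrFun hcoe p]; exact Φ.map_source (hUΦ hp)
    have hsymm : Φ.symm (η p) = p := hleft p hp
    obtain ⟨e, he⟩ := hequiv (fderiv ℝ η p) hp.1.2
    have hde : HasFDerivAt Φ (e : (ℝ × ℝ × (Fin m → ℝ)) →L[ℝ] ℝ × ℝ × (Fin m → ℝ))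
        (Φ.symm (η p)) := by
      rw [hsymm, hcoe, he]
      exact ((hηat p (hUW hp)).differentiableAt (by simp)).hasFDerivAt
    have hcd : ContDiffAt ℝ (⊤ : ℕ∞) Φ (Φ.symm (η p)) := by
      rw [hsymm, hcoe]; exact hηat p (hUW hp)
    exact (Φ.contDiffAt_symm hpη hde hcd).contDiffWithinAt
  · -- the Jacobian on {r = 0}
    intro p hp hr
    have hp2 : p = (p.1, (0 : ℝ), p.2.2) := by rw [← hr]
    have hGp : G p = g p.2.2 := by
      conv_lhs => rw [hp2]
      exact hg p.1 p.2.2 (by rw [← hp2]; exact hUV hp)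
    have hgpos : 0 < g p.2.2 := hGp ▸ hGpos p (hUW hp)
    have hfd : fderiv ℝ η p = L ((g p.2.2) ^ ((1 : ℝ) / k)) := by
      rw [(hderiv p (hUW hp) hr).fderiv, hGp]
    refine ⟨?_, (Real.rpow_pos_of_pos hgpos _).ne'⟩
    rw [hfd]
    have hLlin : (L ((g p.2.2) ^ ((1 : ℝ) / k))).toLinearMap =
        (LinearMap.id (R := ℝ) (M := ℝ)).prodMap
          ((((g p.2.2) ^ ((1 : ℝ) / k)) • LinearMap.id (R := ℝ) (M := ℝ)).prodMap
            (LinearMap.id (R := ℝ) (M := Fin m → ℝ))) := by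
      rfl
    rw [hLlin, my_det_prodMap, my_det_prodMap, LinearMap.det_smul, LinearMap.det_id,
      Module.finrank_self, pow_one]
    simp
  · -- the phase identity
    intro p hp
    have h0 : (0 : ℝ) ≤ G p := le_of_lt (hGpos p (hUW hp))
    have hpow : ((G p) ^ ((1 : ℝ) / k)) ^ k = G p := by
      rw [← Real.rpow_natCast ((G p) ^ ((1 : ℝ) / k)) k, ← Real.rpow_mul h0, one_div,
        inv_mul_cancel₀ hk0, Real.rpow_one]
    show -(p.1) * p.2.1 ^ k * G p = -(p.1 * (p.2.1 * (G p) ^ ((1 : ℝ) / k)) ^ k)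
    rw [mul_pow, hpow]
    ring


/- STATEMENT 10: Normal form away from the zero set (first part of the
resolution-of-singularities lemma): near a direction where f(θ₀) = F(t₀,0,θ₀) ≠ 0
the map η(t,r,θ) = (t, r·(±F)^{1/k}, θ) is a smooth local diffeomorphism with
Jacobian (±f(θ))^{1/k} ≠ 0 on {r = 0}, and −t r^k F = ∓η₀η₁^k. -/

theorem normal_form_nonvanishing_directions
    (k m : ℕ) (hk : 1 ≤ k) (hm : 1 ≤ m)
    (F : ℝ × ℝ × (Fin m → ℝ) → ℝ)
    (f : (Fin m → ℝ) → ℝ)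
    (t₀ : ℝ) (θ₀ : Fin m → ℝ)
    (V : Set (ℝ × ℝ × (Fin m → ℝ)))
    (hVopen : IsOpen V) (hV : (t₀, (0 : ℝ), θ₀) ∈ V)
    (hF : ContDiffOn ℝ (⊤ : ℕ∞) F V)
    (hf : ∀ (t : ℝ) (θ : Fin m → ℝ), (t, (0 : ℝ), θ) ∈ V → F (t, 0, θ) = f θ) :
    -- case f(θ₀) > 0 : normal form −η₀η₁^k
    (0 < f θ₀ →
      ∃ η : ℝ × ℝ × (Fin m → ℝ) → ℝ × ℝ × (Fin m → ℝ),
        (∀ p : ℝ × ℝ × (Fin m → ℝ),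
          η p = (p.1, p.2.1 * (F p) ^ ((1 : ℝ) / k), p.2.2)) ∧
        ∃ U : Set (ℝ × ℝ × (Fin m → ℝ)),
          IsOpen U ∧ (t₀, (0 : ℝ), θ₀) ∈ U ∧ U ⊆ V ∧
          ContDiffOn ℝ (⊤ : ℕ∞) η U ∧ Set.InjOn η U ∧ IsOpen (η '' U) ∧
          (∃ ηinv : ℝ × ℝ × (Fin m → ℝ) → ℝ × ℝ × (Fin m → ℝ),
            ContDiffOn ℝ (⊤ : ℕ∞) ηinv (η '' U) ∧ ∀ p ∈ U, ηinv (η p) = p) ∧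
          (∀ p ∈ U, p.2.1 = 0 →
            LinearMap.det (fderiv ℝ η p).toLinearMap = (f p.2.2) ^ ((1 : ℝ) / k) ∧
            (f p.2.2) ^ ((1 : ℝ) / k) ≠ 0) ∧
          (∀ p ∈ U, -(p.1) * p.2.1 ^ k * F p = -((η p).1 * (η p).2.1 ^ k))) ∧
    -- case f(θ₀) < 0 : normal form +η₀η₁^k
    (f θ₀ < 0 →
      ∃ η : ℝ × ℝ × (Fin m → ℝ) → ℝ × ℝ × (Fin m → ℝ),
        (∀ p : ℝ × ℝ × (Fin m → ℝ),
          η p = (p.1, p.2.1 * (-(F p)) ^ ((1 : ℝ) / k), p.2.2)) ∧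
        ∃ U : Set (ℝ × ℝ × (Fin m → ℝ)),
          IsOpen U ∧ (t₀, (0 : ℝ), θ₀) ∈ U ∧ U ⊆ V ∧
          ContDiffOn ℝ (⊤ : ℕ∞) η U ∧ Set.InjOn η U ∧ IsOpen (η '' U) ∧
          (∃ ηinv : ℝ × ℝ × (Fin m → ℝ) → ℝ × ℝ × (Fin m → ℝ),
            ContDiffOn ℝ (⊤ : ℕ∞) ηinv (η '' U) ∧ ∀ p ∈ U, ηinv (η p) = p) ∧
          (∀ p ∈ U, p.2.1 = 0 →
            LinearMap.det (fderiv ℝ η p).toLinearMap = (-(f p.2.2)) ^ ((1 : ℝ) / k) ∧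
            (-(f p.2.2)) ^ ((1 : ℝ) / k) ≠ 0) ∧
          (∀ p ∈ U, -(p.1) * p.2.1 ^ k * F p = (η p).1 * (η p).2.1 ^ k)) := by
  constructor
  · intro hpos
    exact normal_form_aux k m hk F f t₀ θ₀ V hVopen hV hF hf hpos
  · intro hneg
    obtain ⟨η, hη, U, h1, h2, h3, h4, h5, h6, h7, h8, h9⟩ :=
      normal_form_aux k m hk (fun p => -(F p)) (fun θ => -(f θ)) t₀ θ₀ V hVopen hV hF.neg
        (fun t θ h => by show -(F (t, 0, θ)) = -(f θ); rw [hf t θ h]) (neg_pos.mpr hneg)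
    refine ⟨η, hη, U, h1, h2, h3, h4, h5, h6, h7, h8, fun p hp => ?_⟩
    linear_combination -1 * (h9 p hp)
end

section
/- Let k ≥ 1 and m ≥ 1 be integers and let F : ℝ × ℝ × ℝ^m → ℝ be smooth on a neighborhood of a point (t₀, 0, θ₀), with F(t,0,θ) = f(θ) independent of t. If f(θ₀) = 0 and ∂f/∂θ₁(θ₀) ≠ 0, then the map η(t,r,θ) = ( t, r, F(t,r,θ), θ₂, …, θ_m ) is a smooth local diffeomorphism at (t₀, 0, θ₀) (its Jacobian determinant at (t₀,0,θ₀) equals ∂f/∂θ₁(θ₀) ≠ 0), and on its domain of definition one has the phase identity −t r^k F(t,r,θ) = −η₀ η₁^k η₂, where η₀, η₁, η₂ denote the first three components of η. -/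
noncomputable section NFAux

open ContinuousLinearMap

/-- Third-coordinate projection as a CLM. -/
def nfP3 (m : ℕ) : (ℝ × ℝ × (Fin m → ℝ)) →L[ℝ] (Fin m → ℝ) :=
  (ContinuousLinearMap.snd ℝ ℝ (Fin m → ℝ)).comp (ContinuousLinearMap.snd ℝ ℝ (ℝ × (Fin m → ℝ)))

/-- `Pi.single i₀` as a CLM. -/
def nfSingle (m : ℕ) (i₀ : Fin m) : ℝ →L[ℝ] (Fin m → ℝ) :=
  LinearMap.toContinuousLinearMap (LinearMap.single ℝ (fun _ : Fin m => ℝ) i₀)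

@[simp] lemma nfSingle_apply (m : ℕ) (i₀ : Fin m) (x : ℝ) :
    nfSingle m i₀ x = Pi.single i₀ x := rfl

/-- Candidate derivative of `η` at a point where `F` has derivative `A`. -/
def nfDeriv (m : ℕ) (i₀ : Fin m) (A : (ℝ × ℝ × (Fin m → ℝ)) →L[ℝ] ℝ) :
    (ℝ × ℝ × (Fin m → ℝ)) →L[ℝ] (ℝ × ℝ × (Fin m → ℝ)) :=
  (ContinuousLinearMap.fst ℝ ℝ (ℝ × (Fin m → ℝ))).prod
    ((((ContinuousLinearMap.fst ℝ ℝ (Fin m → ℝ))).comp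
        (ContinuousLinearMap.snd ℝ ℝ (ℝ × (Fin m → ℝ)))).prod
      (nfP3 m + (nfSingle m i₀).comp
        (A - (ContinuousLinearMap.proj i₀).comp (nfP3 m))))

@[simp] lemma nfDeriv_apply (m : ℕ) (i₀ : Fin m) (A : (ℝ × ℝ × (Fin m → ℝ)) →L[ℝ] ℝ)
    (x : ℝ × ℝ × (Fin m → ℝ)) :
    nfDeriv m i₀ A x = (x.1, x.2.1, x.2.2 + Pi.single i₀ (A x - x.2.2 i₀)) := rfl

lemma nfDeriv_det (m : ℕ) (i₀ : Fin m) (A : (ℝ × ℝ × (Fin m → ℝ)) →L[ℝ] ℝ) :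
    LinearMap.det (nfDeriv m i₀ A).toLinearMap = A (0, 0, Pi.single i₀ 1) := by
  classical
  set b : Module.Basis (Unit ⊕ Unit ⊕ Fin m) ℝ (ℝ × ℝ × (Fin m → ℝ)) :=
    (Module.Basis.singleton Unit ℝ).prod ((Module.Basis.singleton Unit ℝ).prod (Pi.basisFun ℝ (Fin m))) with hb
  have hbrepr : ∀ (x : ℝ × ℝ × (Fin m → ℝ)) (i : Unit ⊕ Unit ⊕ Fin m),
      b.repr x i = Sum.elim (fun _ => x.1) (Sum.elim (fun _ => x.2.1) (fun j => x.2.2 j)) i := by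
    rintro x (i | i | j) <;>
      simp [hb, Module.Basis.prod_repr_inl, Module.Basis.prod_repr_inr, Module.Basis.singleton_repr]
  set idx : Unit ⊕ Unit ⊕ Fin m := Sum.inr (Sum.inr i₀) with hidx
  have hbidx : b idx = (0, 0, Pi.single i₀ 1) := by
    apply b.repr.injective
    ext i
    rw [Module.Basis.repr_self]
    rcases i with i | i | j
    · simp [hbrepr, Finsupp.single_apply, hidx]
    · simp [hbrepr, Finsupp.single_apply, hidx]
    · simp only [hbrepr]
      simp [Finsupp.single_apply, hidx, Pi.single_apply, eq_comm]
  rw [← LinearMap.det_toMatrix b]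
  have hM : LinearMap.toMatrix b b (nfDeriv m i₀ A).toLinearMap
      = 1 + Matrix.replicateCol Unit (Pi.single idx (1:ℝ)) *
          Matrix.replicateRow Unit (fun j => A (b j) - (1 : Matrix (Unit ⊕ Unit ⊕ Fin m) (Unit ⊕ Unit ⊕ Fin m) ℝ) idx j) := by
    ext i j
    rw [LinearMap.toMatrix_apply]
    have hone : ∀ i' j', (1 : Matrix (Unit ⊕ Unit ⊕ Fin m) (Unit ⊕ Unit ⊕ Fin m) ℝ) i' j'
        = b.repr (b j') i' := by
      intro i' j'
      rw [Module.Basis.repr_self, Matrix.one_apply, Finsupp.single_apply]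
      simp [eq_comm]
    have hmul : (Matrix.replicateCol Unit (Pi.single idx (1:ℝ)) *
          Matrix.replicateRow Unit (fun j => A (b j) - (1 : Matrix (Unit ⊕ Unit ⊕ Fin m) (Unit ⊕ Unit ⊕ Fin m) ℝ) idx j)) i j
        = (Pi.single idx (1:ℝ) : (Unit ⊕ Unit ⊕ Fin m) → ℝ) i * (A (b j) - (1 : Matrix (Unit ⊕ Unit ⊕ Fin m) (Unit ⊕ Unit ⊕ Fin m) ℝ) idx j) := by
      simp [Matrix.mul_apply]
    rw [Matrix.add_apply, hmul]
    rcases eq_or_ne i idx with rfl | hi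
    · -- row idx
      rw [hbrepr]
      simp only [hidx, Sum.elim_inr, ContinuousLinearMap.coe_coe, nfDeriv_apply]
      rw [hone]
      rw [hbrepr]
      simp [Pi.single_apply]
    · -- other rows: LHS = b.repr (b j) i
      have hs : (Pi.single idx (1:ℝ) : (Unit ⊕ Unit ⊕ Fin m) → ℝ) i = 0 := by
        simp [Pi.single_apply, hi]
      rw [hs, zero_mul, add_zero, hone]
      rcases i with i | i | jj
      · rw [hbrepr, hbrepr]; simp
      · rw [hbrepr, hbrepr]; simp
      · have hjj : jj ≠ i₀ := by
          intro h; apply hi; rw [hidx, h]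
        rw [hbrepr, hbrepr]
        simp [Pi.single_apply, hjj]
  rw [hM, Matrix.det_one_add_replicateCol_mul_replicateRow, dotProduct_single, hbidx]
  simp [Matrix.one_apply]

end NFAux

section Part2
variable {m : ℕ}

lemma nfupdate_eq (i₀ : Fin m) (x : Fin m → ℝ) (v : ℝ) :
    Function.update x i₀ v = x + Pi.single i₀ (v - x i₀) := by
  funext j
  rcases eq_or_ne j i₀ with rfl | h
  · simp
  · simp [Function.update_of_ne h, Pi.single_apply, h]

lemma nfeta_eq (i₀ : Fin m) (F : ℝ × ℝ × (Fin m → ℝ) → ℝ) :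
    (fun p : ℝ × ℝ × (Fin m → ℝ) => (p.1, p.2.1, Function.update p.2.2 i₀ (F p)))
      = fun p : ℝ × ℝ × (Fin m → ℝ) =>
          (p.1, p.2.1, p.2.2 + Pi.single i₀ (F p - p.2.2 i₀)) := by
  funext p
  simp [nfupdate_eq]

lemma nfeta_hasFDerivAt (i₀ : Fin m) (F : ℝ × ℝ × (Fin m → ℝ) → ℝ)
    {A : (ℝ × ℝ × (Fin m → ℝ)) →L[ℝ] ℝ} {p : ℝ × ℝ × (Fin m → ℝ)}
    (hFp : HasFDerivAt F A p) :
    HasFDerivAt (fun q : ℝ × ℝ × (Fin m → ℝ) =>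
        (q.1, q.2.1, Function.update q.2.2 i₀ (F q))) (nfDeriv m i₀ A) p := by
  rw [nfeta_eq]
  have hinner : HasFDerivAt (fun q : ℝ × ℝ × (Fin m → ℝ) => F q - q.2.2 i₀)
      (A - (ContinuousLinearMap.proj i₀).comp (nfP3 m)) p :=
    hFp.sub (((ContinuousLinearMap.proj i₀).comp (nfP3 m)).hasFDerivAt)
  have hsing : HasFDerivAt (fun q : ℝ × ℝ × (Fin m → ℝ) =>
      Pi.single i₀ (F q - q.2.2 i₀) : _ → (Fin m → ℝ))
      ((nfSingle m i₀).comp (A - (ContinuousLinearMap.proj i₀).comp (nfP3 m))) p :=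
    ((nfSingle m i₀).hasFDerivAt).comp p hinner
  have h3 : HasFDerivAt (fun q : ℝ × ℝ × (Fin m → ℝ) =>
      q.2.2 + Pi.single i₀ (F q - q.2.2 i₀) : _ → (Fin m → ℝ))
      (nfP3 m + (nfSingle m i₀).comp (A - (ContinuousLinearMap.proj i₀).comp (nfP3 m))) p :=
    ((nfP3 m).hasFDerivAt).add hsing
  exact HasFDerivAt.prodMk (hasFDerivAt_fst)
    ((((ContinuousLinearMap.fst ℝ ℝ (Fin m → ℝ)).comp
        (ContinuousLinearMap.snd ℝ ℝ (ℝ × (Fin m → ℝ)))).hasFDerivAt).prodMk h3)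

lemma nfeta_contDiffOn (i₀ : Fin m) (F : ℝ × ℝ × (Fin m → ℝ) → ℝ)
    {V : Set (ℝ × ℝ × (Fin m → ℝ))} (hF : ContDiffOn ℝ (⊤ : ℕ∞) F V) :
    ContDiffOn ℝ (⊤ : ℕ∞) (fun p : ℝ × ℝ × (Fin m → ℝ) =>
      (p.1, p.2.1, Function.update p.2.2 i₀ (F p))) V := by
  rw [nfeta_eq]
  have hinner : ContDiffOn ℝ (⊤ : ℕ∞) (fun q : ℝ × ℝ × (Fin m → ℝ) => F q - q.2.2 i₀) V :=
    hF.sub (((ContinuousLinearMap.proj i₀).comp (nfP3 m)).contDiff.contDiffOn)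
  have h3 : ContDiffOn ℝ (⊤ : ℕ∞) (fun q : ℝ × ℝ × (Fin m → ℝ) =>
      q.2.2 + Pi.single i₀ (F q - q.2.2 i₀) : _ → (Fin m → ℝ)) V :=
    ((nfP3 m).contDiff.contDiffOn).add
      ((nfSingle m i₀).contDiff.comp_contDiffOn hinner)
  exact (contDiff_fst.contDiffOn).prodMk
    (((((ContinuousLinearMap.fst ℝ ℝ (Fin m → ℝ)).comp
        (ContinuousLinearMap.snd ℝ ℝ (ℝ × (Fin m → ℝ)))).contDiff.contDiffOn).prodMk h3))

end Part2

/- STATEMENT 11: Normal form near the zero set (second part of the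
resolution-of-singularities lemma): if f(θ₀) = 0 and ∂f/∂θ₁(θ₀) ≠ 0, the map
η(t,r,θ) = (t, r, F(t,r,θ), θ₂,…,θ_m) (implemented as the coordinate change
replacing θ₁ by F(t,r,θ)) is a smooth local diffeomorphism at (t₀,0,θ₀) with
Jacobian determinant ∂f/∂θ₁(θ₀) ≠ 0 there, and −t r^k F = −η₀ η₁^k η₂. -/

theorem normal_form_near_zero_set
    (k m : ℕ) (hk : 1 ≤ k) (hm : 1 ≤ m)
    (F : ℝ × ℝ × (Fin m → ℝ) → ℝ)
    (f : (Fin m → ℝ) → ℝ)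
    (t₀ : ℝ) (θ₀ : Fin m → ℝ)
    (V : Set (ℝ × ℝ × (Fin m → ℝ)))
    (hVopen : IsOpen V) (hV : (t₀, (0 : ℝ), θ₀) ∈ V)
    (hF : ContDiffOn ℝ (⊤ : ℕ∞) F V)
    (hf : ∀ (t : ℝ) (θ : Fin m → ℝ), (t, (0 : ℝ), θ) ∈ V → F (t, 0, θ) = f θ)
    (hf0 : f θ₀ = 0)
    (hdf : fderiv ℝ f θ₀ (Pi.single (⟨0, hm⟩ : Fin m) 1) ≠ 0) :
    ∃ η : ℝ × ℝ × (Fin m → ℝ) → ℝ × ℝ × (Fin m → ℝ),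
      (∀ p : ℝ × ℝ × (Fin m → ℝ),
        η p = (p.1, p.2.1, Function.update p.2.2 (⟨0, hm⟩ : Fin m) (F p))) ∧
      ∃ U : Set (ℝ × ℝ × (Fin m → ℝ)),
        IsOpen U ∧ (t₀, (0 : ℝ), θ₀) ∈ U ∧ U ⊆ V ∧
        ContDiffOn ℝ (⊤ : ℕ∞) η U ∧ Set.InjOn η U ∧ IsOpen (η '' U) ∧
        (∃ ηinv : ℝ × ℝ × (Fin m → ℝ) → ℝ × ℝ × (Fin m → ℝ),
          ContDiffOn ℝ (⊤ : ℕ∞) ηinv (η '' U) ∧ ∀ p ∈ U, ηinv (η p) = p) ∧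
        LinearMap.det (fderiv ℝ η (t₀, (0 : ℝ), θ₀)).toLinearMap
          = fderiv ℝ f θ₀ (Pi.single (⟨0, hm⟩ : Fin m) 1) ∧
        (∀ p ∈ U,
          -(p.1) * p.2.1 ^ k * F p
            = -((η p).1 * (η p).2.1 ^ k * (η p).2.2 (⟨0, hm⟩ : Fin m))) := by
  classical
  set i₀ : Fin m := ⟨0, hm⟩ with hi₀
  set p₀ : ℝ × ℝ × (Fin m → ℝ) := (t₀, (0 : ℝ), θ₀) with hp₀
  set η : ℝ × ℝ × (Fin m → ℝ) → ℝ × ℝ × (Fin m → ℝ) :=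
    fun p => (p.1, p.2.1, Function.update p.2.2 i₀ (F p)) with hη
  -- basic smoothness facts
  have hFat : ∀ p ∈ V, ContDiffAt ℝ (⊤ : ℕ∞) F p := fun p hp => hF.contDiffAt (hVopen.mem_nhds hp)
  have hFd : ∀ p ∈ V, HasFDerivAt F (fderiv ℝ F p) p := fun p hp =>
    ((hFat p hp).differentiableAt (by simp)).hasFDerivAt
  have hηd : ∀ p ∈ V, HasFDerivAt η (nfDeriv m i₀ (fderiv ℝ F p)) p := fun p hp =>
    nfeta_hasFDerivAt i₀ F (hFd p hp)
  have hηCD : ContDiffOn ℝ (⊤ : ℕ∞) η V := nfeta_contDiffOn i₀ F hF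
  have hηat : ∀ p ∈ V, ContDiffAt ℝ (⊤ : ℕ∞) η p := fun p hp => hηCD.contDiffAt (hVopen.mem_nhds hp)
  -- the key derivative identity : fderiv f θ₀ (e₁) = fderiv F p₀ (0,0,e₁)
  set D : ℝ := fderiv ℝ f θ₀ (Pi.single i₀ 1) with hD
  have hcD : fderiv ℝ F p₀ (0, 0, Pi.single i₀ 1) = D := by
    set J : (Fin m → ℝ) →L[ℝ] (ℝ × ℝ × (Fin m → ℝ)) :=
      (0 : (Fin m → ℝ) →L[ℝ] ℝ).prod
        ((0 : (Fin m → ℝ) →L[ℝ] ℝ).prod (ContinuousLinearMap.id ℝ (Fin m → ℝ))) with hJ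
    have hγ : HasFDerivAt (fun θ : Fin m → ℝ => ((t₀ : ℝ), ((0 : ℝ), θ))) J θ₀ :=
      HasFDerivAt.prodMk (hasFDerivAt_const t₀ θ₀) (HasFDerivAt.prodMk (hasFDerivAt_const (0 : ℝ) θ₀) (hasFDerivAt_id θ₀))
    have hcomp : HasFDerivAt (fun θ : Fin m → ℝ => F (t₀, 0, θ))
        ((fderiv ℝ F p₀).comp J) θ₀ := (hFd p₀ hV).comp θ₀ hγ
    have hEq : f =ᶠ[nhds θ₀] fun θ : Fin m → ℝ => F (t₀, 0, θ) := by
      have hW : IsOpen {θ : Fin m → ℝ | (t₀, (0 : ℝ), θ) ∈ V} :=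
        hVopen.preimage (by fun_prop)
      filter_upwards [hW.mem_nhds hV] with θ hθ
      exact (hf t₀ θ hθ).symm
    have hfd : HasFDerivAt f ((fderiv ℝ F p₀).comp J) θ₀ :=
      hcomp.congr_of_eventuallyEq hEq
    rw [hD, hfd.fderiv]
    rfl
  have hdet₀ : LinearMap.det (nfDeriv m i₀ (fderiv ℝ F p₀)).toLinearMap = D := by
    rw [nfDeriv_det, hcD]
  have hdetne : (nfDeriv m i₀ (fderiv ℝ F p₀)).det ≠ 0 := by
    show LinearMap.det (nfDeriv m i₀ (fderiv ℝ F p₀)).toLinearMap ≠ 0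
    rw [hdet₀]; exact hdf
  -- partial homeomorph from the inverse function theorem
  set e₀ : (ℝ × ℝ × (Fin m → ℝ)) ≃L[ℝ] (ℝ × ℝ × (Fin m → ℝ)) :=
    (nfDeriv m i₀ (fderiv ℝ F p₀)).toContinuousLinearEquivOfDetNeZero hdetne with he₀
  have he₀d : HasFDerivAt η (e₀ : (ℝ × ℝ × (Fin m → ℝ)) →L[ℝ] (ℝ × ℝ × (Fin m → ℝ))) p₀ := by
    rw [he₀, ContinuousLinearMap.coe_toContinuousLinearEquivOfDetNeZero]
    exact hηd p₀ hV
  set Φ := (hηat p₀ hV).toOpenPartialHomeomorph η he₀d (by simp) with hΦ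
  have hΦcoe : (Φ : (ℝ × ℝ × (Fin m → ℝ)) → (ℝ × ℝ × (Fin m → ℝ))) = η := rfl
  -- the set where the derivative is invertible
  have hfdcont : ContinuousOn (fun p => (fderiv ℝ η p).det) V :=
    ContinuousLinearMap.continuous_det.comp_continuousOn
      (hηCD.continuousOn_fderiv_of_isOpen hVopen (by simp))
  set V' : Set (ℝ × ℝ × (Fin m → ℝ)) :=
    V ∩ (fun p => (fderiv ℝ η p).det) ⁻¹' ({0}ᶜ) with hV'
  have hV'open : IsOpen V' :=
    hfdcont.isOpen_inter_preimage hVopen isOpen_compl_singleton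
  have hfp₀ : fderiv ℝ η p₀ = nfDeriv m i₀ (fderiv ℝ F p₀) := (hηd p₀ hV).fderiv
  have hp₀V' : p₀ ∈ V' := by
    refine ⟨hV, ?_⟩
    simp only [Set.mem_preimage, Set.mem_compl_iff, Set.mem_singleton_iff]
    rw [hfp₀]
    exact hdetne
  set U : Set (ℝ × ℝ × (Fin m → ℝ)) := V' ∩ Φ.source with hU
  have hUopen : IsOpen U := hV'open.inter Φ.open_source
  have hUp₀ : p₀ ∈ U := ⟨hp₀V', ContDiffAt.mem_toOpenPartialHomeomorph_source _ _ _⟩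
  have hUV : U ⊆ V := fun p hp => hp.1.1
  refine ⟨η, fun p => rfl, U, hUopen, hUp₀, hUV, hηCD.mono hUV, ?_, ?_, ?_, ?_, ?_⟩
  · -- injectivity
    exact Φ.injOn.mono (Set.inter_subset_right)
  · -- open image
    exact Φ.isOpen_image_of_subset_source hUopen Set.inter_subset_right
  · -- smooth local inverse
    refine ⟨Φ.symm, ?_, fun p hp => Φ.left_inv hp.2⟩
    rintro q ⟨p, hp, rfl⟩
    have hsymm : Φ.symm (η p) = p := Φ.left_inv hp.2
    have hpdet : (fderiv ℝ η p).det ≠ 0 := hp.1.2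
    have hηtgt : η p ∈ Φ.target := Φ.map_source hp.2
    have hd : HasFDerivAt (Φ : _ → _)
        (((fderiv ℝ η p).toContinuousLinearEquivOfDetNeZero hpdet : _ →L[ℝ] _)) (Φ.symm (η p)) := by
      rw [hsymm, ContinuousLinearMap.coe_toContinuousLinearEquivOfDetNeZero, hΦcoe]
      exact ((hηat p (hUV hp)).differentiableAt (by simp)).hasFDerivAt
    have hca : ContDiffAt ℝ (⊤ : ℕ∞) (Φ : _ → _) (Φ.symm (η p)) := by
      rw [hsymm, hΦcoe]; exact hηat p (hUV hp)
    exact ((Φ.contDiffAt_symm hηtgt hd hca).contDiffWithinAt)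
  · -- Jacobian determinant
    rw [hfp₀, hdet₀]
  · -- phase identity
    intro p hp
    simp only [hη, Function.update_self]
    ring
end
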